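/- arXiv:1508.07871 — 11 statements merged into one kernel-verified Lean document; each statement's English description precedes it below -/
import Mathlib

section
/- Let H : [0,∞) → ℝ satisfy H(0) = 0, H positive and twice continuously differentiable on (0,∞) with H'(r) > 0 for r > 0, H(r)/H'(r) → 0 as r → 0⁺, and suppose there are constants 0 < α₀ ≤ α₁ < 1 with α₀ ≤ H(r)H''(r)/H'(r)² ≤ α₁ for all r > 0. Set aᵢ := 1/(1−αᵢ). Then for all r ≥ r₀ > 0 one has (r/r₀)^{a₀} ≤ H(r)/H(r₀) ≤ (r/r₀)^{a₁}. -/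
open Set Filter MeasureTheory

/-- Lemma 9.3, inequality (9.4): power growth bounds above `r₀`
for a positive `C²` function `H` on `(0,∞)` with `H(0)=0`, `H' > 0`,
`H/H' → 0` at `0⁺`, and pinched logarithmic curvature
`α₀ ≤ H H''/(H')² ≤ α₁`. -/
theorem stmt0
    (H H' H'' : ℝ → ℝ) (α₀ α₁ : ℝ)
    (hH0 : H 0 = 0)
    (hHpos : ∀ r : ℝ, 0 < r → 0 < H r)
    (hHd : ∀ r : ℝ, 0 < r → HasDerivAt H (H' r) r)
    (hHd2 : ∀ r : ℝ, 0 < r → HasDerivAt H' (H'' r) r)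
    (hH''cont : ContinuousOn H'' (Ioi 0))
    (hH'pos : ∀ r : ℝ, 0 < r → 0 < H' r)
    (hlim : Tendsto (fun r => H r / H' r) (nhdsWithin 0 (Ioi 0)) (nhds 0))
    (hα₀ : 0 < α₀) (hα : α₀ ≤ α₁) (hα₁ : α₁ < 1)
    (hpinch : ∀ r : ℝ, 0 < r →
      α₀ ≤ H r * H'' r / (H' r) ^ 2 ∧ H r * H'' r / (H' r) ^ 2 ≤ α₁)
    (r₀ r : ℝ) (hr₀ : 0 < r₀) (hr : r₀ ≤ r) :
    (r / r₀) ^ (1 / (1 - α₀)) ≤ H r / H r₀ ∧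
      H r / H r₀ ≤ (r / r₀) ^ (1 / (1 - α₁)) := by
  have hα₀1 : α₀ < 1 := lt_of_le_of_lt hα hα₁
  set G : ℝ → ℝ := fun s => H s / H' s with hGdef
  have hGd : ∀ s : ℝ, 0 < s → HasDerivAt G (1 - H s * H'' s / (H' s) ^ 2) s := by
    intro s hs
    have h := (hHd s hs).div (hHd2 s hs) (hH'pos s hs).ne'
    have h0 := (hH'pos s hs).ne'
    have e : (H' s * H' s - H s * H'' s) / H' s ^ 2 = 1 - H s * H'' s / (H' s) ^ 2 := by
      rw [div_eq_iff (pow_ne_zero 2 h0), sub_mul, div_mul_cancel₀ _ (pow_ne_zero 2 h0)]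
      ring
    exact h.congr_deriv e
  -- MVT for G on [x,y] ⊆ (0,∞)
  have hGmvt : ∀ x y : ℝ, 0 < x → x ≤ y →
      (1 - α₁) * (y - x) ≤ G y - G x ∧ G y - G x ≤ (1 - α₀) * (y - x) := by
    intro x y hx hxy
    have hsub : Icc x y ⊆ Ioi 0 := fun s hs => lt_of_lt_of_le hx hs.1
    have hcont : ContinuousOn G (Icc x y) := fun s hs =>
      ((hGd s (hsub hs)).continuousAt).continuousWithinAt
    have hdiff : DifferentiableOn ℝ G (interior (Icc x y)) := by
      intro s hs
      rw [interior_Icc] at hs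
      exact ((hGd s (lt_of_lt_of_le hx hs.1.le)).differentiableAt).differentiableWithinAt
    have hderiv : ∀ s ∈ interior (Icc x y),
        deriv G s = 1 - H s * H'' s / (H' s) ^ 2 := by
      intro s hs
      rw [interior_Icc] at hs
      exact (hGd s (lt_of_lt_of_le hx hs.1.le)).deriv
    constructor
    · refine (convex_Icc x y).mul_sub_le_image_sub_of_le_deriv hcont hdiff ?_ x
        (left_mem_Icc.2 hxy) y (right_mem_Icc.2 hxy) hxy
      intro s hs
      rw [hderiv s hs]
      rw [interior_Icc] at hs
      linarith [(hpinch s (lt_of_lt_of_le hx hs.1.le)).2]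
    · refine (convex_Icc x y).image_sub_le_mul_sub_of_deriv_le hcont hdiff ?_ x
        (left_mem_Icc.2 hxy) y (right_mem_Icc.2 hxy) hxy
      intro s hs
      rw [hderiv s hs]
      rw [interior_Icc] at hs
      linarith [(hpinch s (lt_of_lt_of_le hx hs.1.le)).1]
  -- bounds on G
  have hGbound : ∀ s : ℝ, 0 < s → (1 - α₁) * s ≤ G s ∧ G s ≤ (1 - α₀) * s := by
    intro s hs
    have hev : ∀ᶠ ε in nhdsWithin 0 (Ioi 0),
        (1 - α₁) * (s - ε) ≤ G s - G ε ∧ G s - G ε ≤ (1 - α₀) * (s - ε) := by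
      filter_upwards [Ioo_mem_nhdsGT_of_mem (Set.mem_Ico.2 ⟨le_refl 0, hs⟩)] with ε hε
      exact hGmvt ε s hε.1 hε.2.le
    have ht1 : Tendsto (fun ε => G s - G ε) (nhdsWithin 0 (Ioi 0)) (nhds (G s)) := by
      have hc : Tendsto (fun _ : ℝ => G s) (nhdsWithin 0 (Ioi 0)) (nhds (G s)) :=
        tendsto_const_nhds
      simpa using hc.sub hlim
    have ht2 : Tendsto (fun ε : ℝ => (1 - α₁) * (s - ε)) (nhdsWithin 0 (Ioi 0))
        (nhds ((1 - α₁) * s)) := by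
      have : Tendsto (fun ε : ℝ => (1 - α₁) * (s - ε)) (nhds 0) (nhds ((1 - α₁) * (s - 0))) := by
        exact (tendsto_const_nhds.sub tendsto_id).const_mul _
      simpa using this.mono_left nhdsWithin_le_nhds
    have ht3 : Tendsto (fun ε : ℝ => (1 - α₀) * (s - ε)) (nhdsWithin 0 (Ioi 0))
        (nhds ((1 - α₀) * s)) := by
      have : Tendsto (fun ε : ℝ => (1 - α₀) * (s - ε)) (nhds 0) (nhds ((1 - α₀) * (s - 0))) := by
        exact (tendsto_const_nhds.sub tendsto_id).const_mul _
      simpa using this.mono_left nhdsWithin_le_nhds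
    constructor
    · exact le_of_tendsto_of_tendsto ht2 ht1 (hev.mono fun ε h => h.1)
    · exact le_of_tendsto_of_tendsto ht1 ht3 (hev.mono fun ε h => h.2)
  have hGpos : ∀ s : ℝ, 0 < s → 0 < G s := fun s hs =>
    div_pos (hHpos s hs) (hH'pos s hs)
  -- bounds on H'/H
  have hlow : ∀ s : ℝ, 0 < s → 1 / ((1 - α₀) * s) ≤ H' s / H s := by
    intro s hs
    have h1 : H s / H' s ≤ (1 - α₀) * s := (hGbound s hs).2
    rw [div_le_div_iff₀ (mul_pos (by linarith) hs) (hHpos s hs)]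
    rw [div_le_iff₀ (hH'pos s hs)] at h1
    nlinarith
  have hhigh : ∀ s : ℝ, 0 < s → H' s / H s ≤ 1 / ((1 - α₁) * s) := by
    intro s hs
    have h1 : (1 - α₁) * s ≤ H s / H' s := (hGbound s hs).1
    rw [div_le_div_iff₀ (hHpos s hs) (mul_pos (by linarith : (0:ℝ) < 1 - α₁) hs)]
    rw [le_div_iff₀ (hH'pos s hs)] at h1
    nlinarith
  -- MVT for log H - a * log on [r₀, r]
  have key : ∀ a : ℝ, (∀ s : ℝ, r₀ ≤ s → s ≤ r →
        0 ≤ H' s / H s - a * s⁻¹) →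
      a * (Real.log r - Real.log r₀) ≤ Real.log (H r) - Real.log (H r₀) := by
    intro a ha
    set f : ℝ → ℝ := fun s => Real.log (H s) - a * Real.log s with hfdef
    have hfd : ∀ s : ℝ, r₀ ≤ s → s ≤ r → HasDerivAt f (H' s / H s - a * s⁻¹) s := by
      intro s h1 h2
      have hs : 0 < s := lt_of_lt_of_le hr₀ h1
      exact ((hHd s hs).log (hHpos s hs).ne').sub ((Real.hasDerivAt_log hs.ne').const_mul a)
    have hcont : ContinuousOn f (Icc r₀ r) := fun s hs =>
      ((hfd s hs.1 hs.2).continuousAt).continuousWithinAt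
    have hdiff : DifferentiableOn ℝ f (interior (Icc r₀ r)) := by
      intro s hs
      rw [interior_Icc] at hs
      exact ((hfd s hs.1.le hs.2.le).differentiableAt).differentiableWithinAt
    have hineq := (convex_Icc r₀ r).mul_sub_le_image_sub_of_le_deriv hcont hdiff
      (C := 0) (fun s hs => by
        rw [interior_Icc] at hs
        rw [(hfd s hs.1.le hs.2.le).deriv]
        exact ha s hs.1.le hs.2.le)
      r₀ (left_mem_Icc.2 hr) r (right_mem_Icc.2 hr) hr
    simp only [hfdef, zero_mul] at hineq
    linarith
  have key2 : ∀ a : ℝ, (∀ s : ℝ, r₀ ≤ s → s ≤ r →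
        H' s / H s - a * s⁻¹ ≤ 0) →
      Real.log (H r) - Real.log (H r₀) ≤ a * (Real.log r - Real.log r₀) := by
    intro a ha
    set f : ℝ → ℝ := fun s => Real.log (H s) - a * Real.log s with hfdef
    have hfd : ∀ s : ℝ, r₀ ≤ s → s ≤ r → HasDerivAt f (H' s / H s - a * s⁻¹) s := by
      intro s h1 h2
      have hs : 0 < s := lt_of_lt_of_le hr₀ h1
      exact ((hHd s hs).log (hHpos s hs).ne').sub ((Real.hasDerivAt_log hs.ne').const_mul a)
    have hcont : ContinuousOn f (Icc r₀ r) := fun s hs =>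
      ((hfd s hs.1 hs.2).continuousAt).continuousWithinAt
    have hdiff : DifferentiableOn ℝ f (interior (Icc r₀ r)) := by
      intro s hs
      rw [interior_Icc] at hs
      exact ((hfd s hs.1.le hs.2.le).differentiableAt).differentiableWithinAt
    have hineq := (convex_Icc r₀ r).image_sub_le_mul_sub_of_deriv_le hcont hdiff
      (C := 0) (fun s hs => by
        rw [interior_Icc] at hs
        rw [(hfd s hs.1.le hs.2.le).deriv]
        exact ha s hs.1.le hs.2.le)
      r₀ (left_mem_Icc.2 hr) r (right_mem_Icc.2 hr) hr
    simp only [hfdef, zero_mul] at hineq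
    linarith
  have hHrpos := hHpos r (lt_of_lt_of_le hr₀ hr)
  have hHr₀pos := hHpos r₀ hr₀
  have hrpos : (0:ℝ) < r := lt_of_lt_of_le hr₀ hr
  have hdivpos : 0 < r / r₀ := div_pos hrpos hr₀
  have hlogsub : Real.log (r / r₀) = Real.log r - Real.log r₀ :=
    Real.log_div hrpos.ne' hr₀.ne'
  have hHdiv : H r / H r₀ = Real.exp (Real.log (H r) - Real.log (H r₀)) := by
    rw [Real.exp_sub, Real.exp_log hHrpos, Real.exp_log hHr₀pos]
  constructor
  · have hk := key (1 / (1 - α₀)) (by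
      intro s h1 h2
      have hs : 0 < s := lt_of_lt_of_le hr₀ h1
      have := hlow s hs
      have heq : (1:ℝ) / (1 - α₀) * s⁻¹ = 1 / ((1 - α₀) * s) := by
        field_simp
      linarith [heq ▸ this])
    rw [Real.rpow_def_of_pos hdivpos, hlogsub, hHdiv]
    exact Real.exp_le_exp.2 (by rw [mul_comm] at hk; linarith)
  · have hk := key2 (1 / (1 - α₁)) (by
      intro s h1 h2
      have hs : 0 < s := lt_of_lt_of_le hr₀ h1
      have h := hhigh s hs
      have heq : (1:ℝ) / (1 - α₁) * s⁻¹ = 1 / ((1 - α₁) * s) := by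
        field_simp
      linarith [heq ▸ h])
    rw [Real.rpow_def_of_pos hdivpos, hlogsub, hHdiv]
    exact Real.exp_le_exp.2 (by rw [mul_comm] at hk; linarith)
end

section
/- Let H : [0,∞) → ℝ satisfy H(0) = 0, H positive and twice continuously differentiable on (0,∞) with H'(r) > 0 for r > 0, H(r)/H'(r) → 0 as r → 0⁺, and suppose there are constants 0 < α₀ ≤ α₁ < 1 with α₀ ≤ H(r)H''(r)/H'(r)² ≤ α₁ for all r > 0. Set aᵢ := 1/(1−αᵢ), κ̄ := (a₁/a₀)^{a₀} and κ̲ := (a₀/a₁)^{a₁}. Then for all 0 < r ≤ r₀ one has κ̲·(r/r₀)^{a₁} ≤ H(r)/H(r₀) ≤ κ̄·(r/r₀)^{a₀}. -/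
open Set Filter MeasureTheory

private lemma mono_aux {f f' : ℝ → ℝ}
    (hd : ∀ x ∈ Ioi (0:ℝ), HasDerivAt f (f' x) x)
    (h0 : ∀ x ∈ Ioi (0:ℝ), 0 ≤ f' x) :
    MonotoneOn f (Ioi 0) := by
  apply monotoneOn_of_deriv_nonneg (convex_Ioi 0)
  · exact fun x hx => (hd x hx).differentiableAt.continuousAt.continuousWithinAt
  · rw [interior_Ioi]
    exact fun x hx => (hd x hx).differentiableAt.differentiableWithinAt
  · rw [interior_Ioi]
    intro x hx
    rw [(hd x hx).deriv]
    exact h0 x hx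

/-- Lemma 9.3, inequality (9.5): power growth bounds below `r₀`,
with constants `κ̄ = (a₁/a₀)^{a₀}` and `κ̲ = (a₀/a₁)^{a₁}`, where `aᵢ = 1/(1-αᵢ)`,
for a positive `C²` function `H` on `(0,∞)` with `H(0)=0`, `H' > 0`,
`H/H' → 0` at `0⁺`, and pinched logarithmic curvature `α₀ ≤ H H''/(H')² ≤ α₁`. -/
theorem stmt1
    (H H' H'' : ℝ → ℝ) (α₀ α₁ : ℝ)
    (hH0 : H 0 = 0)
    (hHpos : ∀ r : ℝ, 0 < r → 0 < H r)
    (hHd : ∀ r : ℝ, 0 < r → HasDerivAt H (H' r) r)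
    (hHd2 : ∀ r : ℝ, 0 < r → HasDerivAt H' (H'' r) r)
    (hH''cont : ContinuousOn H'' (Ioi 0))
    (hH'pos : ∀ r : ℝ, 0 < r → 0 < H' r)
    (hlim : Tendsto (fun r => H r / H' r) (nhdsWithin 0 (Ioi 0)) (nhds 0))
    (hα₀ : 0 < α₀) (hα : α₀ ≤ α₁) (hα₁ : α₁ < 1)
    (hpinch : ∀ r : ℝ, 0 < r →
      α₀ ≤ H r * H'' r / (H' r) ^ 2 ∧ H r * H'' r / (H' r) ^ 2 ≤ α₁)
    (a₀ a₁ : ℝ) (ha₀ : a₀ = 1 / (1 - α₀)) (ha₁ : a₁ = 1 / (1 - α₁))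
    (r₀ r : ℝ) (hr : 0 < r) (hrr₀ : r ≤ r₀) :
    (a₀ / a₁) ^ a₁ * (r / r₀) ^ a₁ ≤ H r / H r₀ ∧
      H r / H r₀ ≤ (a₁ / a₀) ^ a₀ * (r / r₀) ^ a₀ := by
  have hr₀ : 0 < r₀ := lt_of_lt_of_le hr hrr₀
  have h1α₀ : 0 < 1 - α₀ := by linarith
  have h1α₁ : 0 < 1 - α₁ := by linarith
  have ha₀pos : 0 < a₀ := by rw [ha₀]; positivity
  have ha₁pos : 0 < a₁ := by rw [ha₁]; positivity
  have ha01 : a₀ ≤ a₁ := by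
    rw [ha₀, ha₁]
    exact one_div_le_one_div_of_le h1α₁ (by linarith)
  -- derivative of G = H/H'
  have hGd : ∀ x ∈ Ioi (0:ℝ), HasDerivAt (fun y => H y / H' y)
      (1 - H x * H'' x / (H' x) ^ 2) x := by
    intro x hx
    have h := (hHd x hx).div (hHd2 x hx) (ne_of_gt (hH'pos x hx))
    apply h.congr_deriv
    have := (hH'pos x hx).ne'
    field_simp
  -- lower bound for G
  have hGlow : ∀ x : ℝ, 0 < x → (1 - α₁) * x ≤ H x / H' x := by
    intro x hx
    have hmono : MonotoneOn (fun y => H y / H' y - (1 - α₁) * y) (Ioi 0) := by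
      apply mono_aux (f' := fun y => (1 - H y * H'' y / (H' y) ^ 2) - (1 - α₁))
      · intro y hy
        exact (hGd y hy).sub (by simpa using (hasDerivAt_id y).const_mul (1 - α₁))
      · intro y hy
        have := (hpinch y hy).2
        linarith
    have htend : Tendsto (fun y => H y / H' y - (1 - α₁) * y)
        (nhdsWithin 0 (Ioi 0)) (nhds 0) := by
      have h2 : Tendsto (fun y : ℝ => (1 - α₁) * y) (nhdsWithin 0 (Ioi 0)) (nhds 0) := by
        have : Tendsto (fun y : ℝ => (1 - α₁) * y) (nhds 0) (nhds ((1 - α₁) * 0)) :=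
          (continuous_const.mul continuous_id).tendsto 0
        simpa using this.mono_left nhdsWithin_le_nhds
      simpa using hlim.sub h2
    have hev : ∀ᶠ y in nhdsWithin 0 (Ioi 0),
        H y / H' y - (1 - α₁) * y ≤ H x / H' x - (1 - α₁) * x := by
      filter_upwards [Ioo_mem_nhdsGT_of_mem (show (0:ℝ) ∈ Ico 0 x from ⟨le_refl _, hx⟩)]
        with y hy
      exact hmono hy.1 hx hy.2.le
    have := le_of_tendsto htend hev
    linarith
  -- upper bound for G
  have hGhigh : ∀ x : ℝ, 0 < x → H x / H' x ≤ (1 - α₀) * x := by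
    intro x hx
    have hmono : MonotoneOn (fun y => (1 - α₀) * y - H y / H' y) (Ioi 0) := by
      apply mono_aux (f' := fun y => (1 - α₀) - (1 - H y * H'' y / (H' y) ^ 2))
      · intro y hy
        exact HasDerivAt.sub (by simpa using (hasDerivAt_id y).const_mul (1 - α₀)) (hGd y hy)
      · intro y hy
        have := (hpinch y hy).1
        linarith
    have htend : Tendsto (fun y => (1 - α₀) * y - H y / H' y)
        (nhdsWithin 0 (Ioi 0)) (nhds 0) := by
      have h2 : Tendsto (fun y : ℝ => (1 - α₀) * y) (nhdsWithin 0 (Ioi 0)) (nhds 0) := by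
        have : Tendsto (fun y : ℝ => (1 - α₀) * y) (nhds 0) (nhds ((1 - α₀) * 0)) :=
          (continuous_const.mul continuous_id).tendsto 0
        simpa using this.mono_left nhdsWithin_le_nhds
      simpa using h2.sub hlim
    have hev : ∀ᶠ y in nhdsWithin 0 (Ioi 0),
        (1 - α₀) * y - H y / H' y ≤ (1 - α₀) * x - H x / H' x := by
      filter_upwards [Ioo_mem_nhdsGT_of_mem (show (0:ℝ) ∈ Ico 0 x from ⟨le_refl _, hx⟩)]
        with y hy
      exact hmono hy.1 hx hy.2.le
    have := le_of_tendsto htend hev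
    linarith
  -- logarithmic derivative bounds
  have hlogd : ∀ x : ℝ, 0 < x → a₀ / x ≤ H' x / H x ∧ H' x / H x ≤ a₁ / x := by
    intro x hx
    have hGpos : 0 < H x / H' x := div_pos (hHpos x hx) (hH'pos x hx)
    have hinv : H' x / H x = (H x / H' x)⁻¹ := by
      rw [inv_div]
    constructor
    · rw [hinv, ha₀, div_div, ← one_div (H x / H' x)]
      exact one_div_le_one_div_of_le hGpos (hGhigh x hx)
    · rw [hinv, ha₁, div_div, ← one_div (H x / H' x)]
      exact one_div_le_one_div_of_le (by positivity) (hGlow x hx)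
  -- monotone comparison with powers, via log
  have hupper : Real.log (H r) - Real.log (H r₀) ≤ a₀ * (Real.log r - Real.log r₀) := by
    have hmono : MonotoneOn (fun y => Real.log (H y) - a₀ * Real.log y) (Ioi 0) := by
      apply mono_aux (f' := fun y => H' y / H y - a₀ * y⁻¹)
      · intro y hy
        exact ((hHd y hy).log (hHpos y hy).ne').sub
          ((Real.hasDerivAt_log (ne_of_gt hy)).const_mul a₀)
      · intro y hy
        have := (hlogd y hy).1
        have : a₀ / y ≤ H' y / H y := this
        rw [div_eq_mul_inv] at this
        linarith
    have := hmono (show r ∈ Ioi (0:ℝ) from hr) (show r₀ ∈ Ioi (0:ℝ) from hr₀) hrr₀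
    simp only [] at this
    linarith
  have hlower : a₁ * (Real.log r - Real.log r₀) ≤ Real.log (H r) - Real.log (H r₀) := by
    have hmono : MonotoneOn (fun y => a₁ * Real.log y - Real.log (H y)) (Ioi 0) := by
      apply mono_aux (f' := fun y => a₁ * y⁻¹ - H' y / H y)
      · intro y hy
        exact HasDerivAt.sub ((Real.hasDerivAt_log (ne_of_gt hy)).const_mul a₁)
          ((hHd y hy).log (hHpos y hy).ne')
      · intro y hy
        have := (hlogd y hy).2
        rw [div_eq_mul_inv a₁] at this
        linarith
    have := hmono (show r ∈ Ioi (0:ℝ) from hr) (show r₀ ∈ Ioi (0:ℝ) from hr₀) hrr₀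
    simp only [] at this
    linarith
  -- convert to ratios
  have hratio : H r / H r₀ = Real.exp (Real.log (H r) - Real.log (H r₀)) := by
    rw [Real.exp_sub, Real.exp_log (hHpos r hr), Real.exp_log (hHpos r₀ hr₀)]
  have hpow : ∀ a : ℝ, (r / r₀) ^ a = Real.exp (a * (Real.log r - Real.log r₀)) := by
    intro a
    rw [Real.rpow_def_of_pos (div_pos hr hr₀), Real.log_div hr.ne' hr₀.ne', mul_comm]
  have key1 : (r / r₀) ^ a₁ ≤ H r / H r₀ := by
    rw [hratio, hpow]
    exact Real.exp_le_exp.2 hlower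
  have key2 : H r / H r₀ ≤ (r / r₀) ^ a₀ := by
    rw [hratio, hpow]
    exact Real.exp_le_exp.2 hupper
  constructor
  · calc (a₀ / a₁) ^ a₁ * (r / r₀) ^ a₁
        ≤ 1 * (r / r₀) ^ a₁ := by
          apply mul_le_mul_of_nonneg_right _ (Real.rpow_nonneg (by positivity) _)
          exact Real.rpow_le_one (by positivity) (div_le_one_of_le₀ ha01 ha₁pos.le) ha₁pos.le
    _ = (r / r₀) ^ a₁ := one_mul _
    _ ≤ H r / H r₀ := key1
  · calc H r / H r₀ ≤ (r / r₀) ^ a₀ := key2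
    _ = 1 * (r / r₀) ^ a₀ := (one_mul _).symm
    _ ≤ (a₁ / a₀) ^ a₀ * (r / r₀) ^ a₀ := by
        apply mul_le_mul_of_nonneg_right _ (Real.rpow_nonneg (by positivity) _)
        calc (1:ℝ) = 1 ^ a₀ := (Real.one_rpow _).symm
        _ ≤ (a₁ / a₀) ^ a₀ := Real.rpow_le_rpow zero_le_one
            ((one_le_div ha₀pos).2 ha01) ha₀pos.le
end

section
/- Let H : [0,∞) → ℝ satisfy H(0) = 0, H positive and twice continuously differentiable on (0,∞) with H'(r) > 0 for r > 0, H(r)/H'(r) → 0 as r → 0⁺, and suppose there are constants 0 < α₀ ≤ α₁ < 1 with α₀ ≤ H(r)H''(r)/H'(r)² ≤ α₁ for all r > 0. Then for every r > 0 one has (1−α₁)·r ≤ H(r)/H'(r) ≤ (1−α₀)·r; equivalently, α₀·r·H'(r) ≤ r·H'(r) − H(r) ≤ α₁·r·H'(r). -/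
open Set Filter MeasureTheory

/-- If `f` has nonnegative derivative on `(0,∞)` and tends to `0` at `0⁺`,
then `f r ≥ 0` for all `r > 0`. -/
lemma aux_nonneg (f f' : ℝ → ℝ)
    (hd : ∀ x : ℝ, 0 < x → HasDerivAt f (f' x) x)
    (hpos : ∀ x : ℝ, 0 < x → 0 ≤ f' x)
    (hlim : Tendsto f (nhdsWithin 0 (Ioi 0)) (nhds 0))
    (r : ℝ) (hr : 0 < r) : 0 ≤ f r := by
  have key : ∀ ε : ℝ, 0 < ε → ε < r → f ε ≤ f r := by
    intro ε hε hεr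
    have hsub : Icc ε r ⊆ Ioi (0:ℝ) := fun x hx => lt_of_lt_of_le hε hx.1
    have hdiff : ∀ x ∈ Icc ε r, HasDerivAt f (f' x) x := fun x hx => hd x (hsub hx)
    have hmono : MonotoneOn f (Icc ε r) := by
      apply monotoneOn_of_deriv_nonneg (convex_Icc ε r)
      · exact fun x hx => (hdiff x hx).continuousAt.continuousWithinAt
      · intro x hx
        rw [interior_Icc] at hx
        exact (hd x (lt_trans hε hx.1)).differentiableAt.differentiableWithinAt
      · intro x hx
        rw [interior_Icc] at hx
        rw [(hd x (lt_trans hε hx.1)).deriv]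
        exact hpos x (lt_trans hε hx.1)
    exact hmono ⟨le_rfl, hεr.le⟩ ⟨hεr.le, le_rfl⟩ hεr.le
  refine le_of_tendsto hlim ?_
  filter_upwards [self_mem_nhdsWithin,
    eventually_nhdsWithin_of_eventually_nhds (eventually_lt_nhds hr)] with ε hε hεr
  exact key ε hε hεr

/-- formulas (5.6)–(5.7) of the paper: under hypothesis (N1),
for every `r > 0` one has `(1-α₁) r ≤ H(r)/H'(r) ≤ (1-α₀) r`; equivalently,
`α₀ r H'(r) ≤ r H'(r) − H(r) ≤ α₁ r H'(r)`. -/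
theorem stmt3
    (H H' H'' : ℝ → ℝ) (α₀ α₁ : ℝ)
    (hH0 : H 0 = 0)
    (hHpos : ∀ r : ℝ, 0 < r → 0 < H r)
    (hHd : ∀ r : ℝ, 0 < r → HasDerivAt H (H' r) r)
    (hHd2 : ∀ r : ℝ, 0 < r → HasDerivAt H' (H'' r) r)
    (hH''cont : ContinuousOn H'' (Ioi 0))
    (hH'pos : ∀ r : ℝ, 0 < r → 0 < H' r)
    (hlim : Tendsto (fun r => H r / H' r) (nhdsWithin 0 (Ioi 0)) (nhds 0))
    (hα₀ : 0 < α₀) (hα : α₀ ≤ α₁) (hα₁ : α₁ < 1)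
    (hpinch : ∀ r : ℝ, 0 < r →
      α₀ ≤ H r * H'' r / (H' r) ^ 2 ∧ H r * H'' r / (H' r) ^ 2 ≤ α₁) :
    ∀ r : ℝ, 0 < r →
      ((1 - α₁) * r ≤ H r / H' r ∧ H r / H' r ≤ (1 - α₀) * r) ∧
      (α₀ * (r * H' r) ≤ r * H' r - H r ∧ r * H' r - H r ≤ α₁ * (r * H' r)) := by
  -- derivative of G = H/H'
  have hGd : ∀ x : ℝ, 0 < x →
      HasDerivAt (fun y => H y / H' y) (1 - H x * H'' x / (H' x) ^ 2) x := by
    intro x hx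
    have h := (hHd x hx).div (hHd2 x hx) (hH'pos x hx).ne'
    refine h.congr_deriv ?_
    have hne := (hH'pos x hx).ne'
    rw [div_eq_iff (pow_ne_zero 2 hne), sub_mul, div_mul_cancel₀ _ (pow_ne_zero 2 hne)]
    ring
  intro r hr
  -- lower bound
  have hlow : (1 - α₁) * r ≤ H r / H' r := by
    have h := aux_nonneg (fun y => H y / H' y - (1 - α₁) * y)
      (fun x => (1 - H x * H'' x / (H' x) ^ 2) - (1 - α₁))
      (fun x hx => by exact ((hGd x hx).sub ((hasDerivAt_id x).const_mul (1 - α₁))).congr_deriv (by ring))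
      (fun x hx => by have := (hpinch x hx).2; linarith)
      ?_ r hr
    · linarith
    · have : Tendsto (fun y : ℝ => (1 - α₁) * y) (nhdsWithin 0 (Ioi 0)) (nhds 0) := by
        have := (tendsto_id.const_mul (1 - α₁) :
          Tendsto (fun y : ℝ => (1 - α₁) * y) (nhds 0) (nhds ((1 - α₁) * 0)))
        simpa using this.mono_left nhdsWithin_le_nhds
      simpa using hlim.sub this
  -- upper bound
  have hup : H r / H' r ≤ (1 - α₀) * r := by
    have h := aux_nonneg (fun y => (1 - α₀) * y - H y / H' y)
      (fun x => (1 - α₀) - (1 - H x * H'' x / (H' x) ^ 2))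
      (fun x hx => by exact (((hasDerivAt_id x).const_mul (1 - α₀)).sub (hGd x hx)).congr_deriv (by ring))
      (fun x hx => by have := (hpinch x hx).1; linarith)
      ?_ r hr
    · linarith
    · have : Tendsto (fun y : ℝ => (1 - α₀) * y) (nhdsWithin 0 (Ioi 0)) (nhds 0) := by
        have := (tendsto_id.const_mul (1 - α₀) :
          Tendsto (fun y : ℝ => (1 - α₀) * y) (nhds 0) (nhds ((1 - α₀) * 0)))
        simpa using this.mono_left nhdsWithin_le_nhds
      simpa using this.sub hlim
  have h1' := (le_div_iff₀ (hH'pos r hr)).mp hlow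
  have h2 := (div_le_iff₀ (hH'pos r hr)).mp hup
  exact ⟨⟨hlow, hup⟩, by nlinarith, by nlinarith⟩
end

section
/- Let F be an (N1)-type nonlinearity with constants 0 < μ₀ ≤ μ₁ < 1, and let F*(z) := sup_{r ≥ 0} (z·r − F(r)) be its Legendre transform. Then for every r > 0, with z = F'(r), one has F*(z) = r·F'(r) − F(r) and μ₀·z·r ≤ F*(z) ≤ μ₁·z·r. -/
open Set Filter MeasureTheory

/-- estimate (5.12) of the paper: for an (N1)-type nonlinearity
`F` with constants `0 < μ₀ ≤ μ₁ < 1` and Legendre transform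
`F*(z) = sup_{ρ ≥ 0} (z ρ − F(ρ))`, for every `r > 0` and `z = F'(r)` one has
`F*(z) = r F'(r) − F(r)` and `μ₀ z r ≤ F*(z) ≤ μ₁ z r`. -/
theorem stmt5
    (F F' F'' : ℝ → ℝ) (μ₀ μ₁ : ℝ)
    (hF0 : F 0 = 0)
    (hFcont : ContinuousOn F (Ici 0))
    (hFmono : MonotoneOn F (Ici 0))
    (hFpos : ∀ r : ℝ, 0 < r → 0 < F r)
    (hFd : ∀ r : ℝ, 0 < r → HasDerivAt F (F' r) r)
    (hFd2 : ∀ r : ℝ, 0 < r → HasDerivAt F' (F'' r) r)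
    (hF''cont : ContinuousOn F'' (Ioi 0))
    (hF'pos : ∀ r : ℝ, 0 < r → 0 < F' r)
    (hFlim : Tendsto (fun r => F r / F' r) (nhdsWithin 0 (Ioi 0)) (nhds 0))
    (hμ₀ : 0 < μ₀) (hμ : μ₀ ≤ μ₁) (hμ₁ : μ₁ < 1)
    (hpinch : ∀ r : ℝ, 0 < r →
      μ₀ ≤ F r * F'' r / (F' r) ^ 2 ∧ F r * F'' r / (F' r) ^ 2 ≤ μ₁)
    (Fstar : ℝ → ℝ)
    (hFstar : ∀ z : ℝ, Fstar z = sSup {y : ℝ | ∃ ρ : ℝ, 0 ≤ ρ ∧ y = z * ρ - F ρ}) :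
    ∀ r : ℝ, 0 < r →
      Fstar (F' r) = r * F' r - F r ∧
      μ₀ * (F' r * r) ≤ Fstar (F' r) ∧
      Fstar (F' r) ≤ μ₁ * (F' r * r) := by
  -- F'' is positive on (0,∞)
  have hF''pos : ∀ x : ℝ, 0 < x → 0 < F'' x := by
    intro x hx
    have h := (hpinch x hx).1
    have hFx := hFpos x hx
    have hF'x := hF'pos x hx
    have hsq : (0:ℝ) < F' x ^ 2 := pow_pos hF'x 2
    have hnum : μ₀ * F' x ^ 2 ≤ F x * F'' x := (le_div_iff₀ hsq).mp h
    nlinarith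
  -- F' is monotone on (0,∞)
  have hF'mono : ∀ a b : ℝ, 0 < a → a ≤ b → F' a ≤ F' b := by
    intro a b ha hab
    rcases eq_or_lt_of_le hab with rfl | h
    · exact le_refl _
    · obtain ⟨c, hc, hceq⟩ := exists_hasDerivAt_eq_slope F' F'' h
        (fun x hx => (hFd2 x (lt_of_lt_of_le ha hx.1)).continuousAt.continuousWithinAt)
        (fun x hx => hFd2 x (ha.trans hx.1))
      have hcpos : 0 < F'' c := hF''pos c (ha.trans hc.1)
      have hba : (0:ℝ) < b - a := sub_pos.mpr h
      have : F' b - F' a = F'' c * (b - a) := by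
        field_simp at hceq; linarith [hceq]
      nlinarith
  -- derivative of F/F'
  have Hderiv : ∀ x : ℝ, 0 < x → HasDerivAt (fun y => F y / F' y)
      ((F' x * F' x - F x * F'' x) / F' x ^ 2) x := by
    intro x hx
    exact (hFd x hx).div (hFd2 x hx) (hF'pos x hx).ne'
  -- slope estimates for F/F'
  have step : ∀ a b : ℝ, 0 < a → a < b →
      (1 - μ₁) * (b - a) ≤ F b / F' b - F a / F' a ∧
      F b / F' b - F a / F' a ≤ (1 - μ₀) * (b - a) := by
    intro a b ha hab
    obtain ⟨c, hc, hceq⟩ := exists_hasDerivAt_eq_slope (fun y => F y / F' y)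
      (fun y => (F' y * F' y - F y * F'' y) / F' y ^ 2) hab
      (fun x hx => (Hderiv x (lt_of_lt_of_le ha hx.1)).continuousAt.continuousWithinAt)
      (fun x hx => Hderiv x (ha.trans hx.1))
    have hcpos : 0 < c := ha.trans hc.1
    obtain ⟨h1, h2⟩ := hpinch c hcpos
    have hF'c := hF'pos c hcpos
    have hsq : (0:ℝ) < F' c ^ 2 := pow_pos hF'c 2
    have hval : (F' c * F' c - F c * F'' c) / F' c ^ 2 = 1 - F c * F'' c / F' c ^ 2 := by
      field_simp
    rw [hval] at hceq
    have hba : (0:ℝ) < b - a := sub_pos.mpr hab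
    constructor
    · have hlow : (1 - μ₁) ≤ (F b / F' b - F a / F' a) / (b - a) := by
        rw [← hceq]; linarith
      calc (1 - μ₁) * (b - a) ≤ ((F b / F' b - F a / F' a) / (b - a)) * (b - a) := by
            exact mul_le_mul_of_nonneg_right hlow hba.le
        _ = F b / F' b - F a / F' a := by field_simp
    · have hup : (F b / F' b - F a / F' a) / (b - a) ≤ (1 - μ₀) := by
        rw [← hceq]; linarith
      calc F b / F' b - F a / F' a
          = ((F b / F' b - F a / F' a) / (b - a)) * (b - a) := by field_simp
        _ ≤ (1 - μ₀) * (b - a) := mul_le_mul_of_nonneg_right hup hba.le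
  -- bounds on F/F'
  have Hbound : ∀ r : ℝ, 0 < r → (1 - μ₁) * r * F' r ≤ F r ∧ F r ≤ (1 - μ₀) * r * F' r := by
    intro r hr
    have hev : Ioo (0:ℝ) r ∈ nhdsWithin (0:ℝ) (Ioi 0) :=
      Ioo_mem_nhdsGT_of_mem ⟨le_refl 0, hr⟩
    have t1 : Tendsto (fun a : ℝ => (1 - μ₁) * (r - a)) (nhdsWithin 0 (Ioi 0))
        (nhds ((1 - μ₁) * r)) := by
      have : Tendsto (fun a : ℝ => (1 - μ₁) * (r - a)) (nhds 0) (nhds ((1 - μ₁) * (r - 0))) :=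
        (tendsto_const_nhds.sub tendsto_id).const_mul _
      simpa using this.mono_left nhdsWithin_le_nhds
    have t3 : Tendsto (fun a : ℝ => (1 - μ₀) * (r - a)) (nhdsWithin 0 (Ioi 0))
        (nhds ((1 - μ₀) * r)) := by
      have : Tendsto (fun a : ℝ => (1 - μ₀) * (r - a)) (nhds 0) (nhds ((1 - μ₀) * (r - 0))) :=
        (tendsto_const_nhds.sub tendsto_id).const_mul _
      simpa using this.mono_left nhdsWithin_le_nhds
    have t2 : Tendsto (fun a : ℝ => F r / F' r - F a / F' a) (nhdsWithin 0 (Ioi 0))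
        (nhds (F r / F' r)) := by
      have h0 : Tendsto (fun _ : ℝ => F r / F' r) (nhdsWithin 0 (Ioi 0))
          (nhds (F r / F' r)) := tendsto_const_nhds
      simpa using h0.sub hFlim
    have hlow : (1 - μ₁) * r ≤ F r / F' r := by
      refine le_of_tendsto_of_tendsto t1 t2 ?_
      filter_upwards [hev] with a ha
      exact (step a r ha.1 ha.2).1
    have hup : F r / F' r ≤ (1 - μ₀) * r := by
      refine le_of_tendsto_of_tendsto t2 t3 ?_
      filter_upwards [hev] with a ha
      exact (step a r ha.1 ha.2).2
    have hF'r := hF'pos r hr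
    constructor
    · have := (le_div_iff₀ hF'r).mp hlow
      linarith
    · have := (div_le_iff₀ hF'r).mp hup
      linarith
  intro r hr
  have hF'r := hF'pos r hr
  obtain ⟨hlowF, hupF⟩ := Hbound r hr
  have hge : μ₀ * (F' r * r) ≤ r * F' r - F r := by nlinarith
  have hle : r * F' r - F r ≤ μ₁ * (F' r * r) := by nlinarith
  -- the sup is attained at r
  have hub : ∀ ρ : ℝ, 0 ≤ ρ → F' r * ρ - F ρ ≤ r * F' r - F r := by
    intro ρ hρ
    rcases eq_or_lt_of_le hρ with rfl | hρpos
    · rw [hF0]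
      have : (0:ℝ) < μ₀ * (F' r * r) := by positivity
      linarith
    rcases lt_trichotomy ρ r with hlt | heq | hgt
    · obtain ⟨c, hc, hceq⟩ := exists_hasDerivAt_eq_slope F F' hlt
        (fun x hx => (hFd x (lt_of_lt_of_le hρpos hx.1)).continuousAt.continuousWithinAt)
        (fun x hx => hFd x (hρpos.trans hx.1))
      have hcmono : F' c ≤ F' r := hF'mono c r (hρpos.trans hc.1) hc.2.le
      have hrρ : (0:ℝ) < r - ρ := sub_pos.mpr hlt
      have hFr : F r - F ρ = F' c * (r - ρ) := by
        field_simp at hceq; linarith [hceq]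
      nlinarith
    · rw [heq]; ring_nf; exact le_refl _
    · obtain ⟨c, hc, hceq⟩ := exists_hasDerivAt_eq_slope F F' hgt
        (fun x hx => (hFd x (lt_of_lt_of_le hr hx.1)).continuousAt.continuousWithinAt)
        (fun x hx => hFd x (hr.trans hx.1))
      have hcmono : F' r ≤ F' c := hF'mono r c hr hc.1.le
      have hρr : (0:ℝ) < ρ - r := sub_pos.mpr hgt
      have hFr : F ρ - F r = F' c * (ρ - r) := by
        field_simp at hceq; linarith [hceq]
      nlinarith
  have hgr : IsGreatest {y : ℝ | ∃ ρ : ℝ, 0 ≤ ρ ∧ y = F' r * ρ - F ρ} (r * F' r - F r) := by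
    constructor
    · exact ⟨r, hr.le, by ring⟩
    · rintro y ⟨ρ, hρ, rfl⟩
      exact hub ρ hρ
  have heq : Fstar (F' r) = r * F' r - F r := by
    rw [hFstar (F' r)]
    exact hgr.csSup_eq
  refine ⟨heq, ?_, ?_⟩ <;> rw [heq]
  · exact hge
  · exact hle
end

section
/- Let m > 1 and let g : (0,∞) → [0,∞) be measurable such that t ↦ t^{m/(m−1)}·g(t) is nondecreasing on (0,∞). Then for all 0 < t₀ ≤ t₁ ≤ t one has (t₀/t₁)^{m/(m−1)}·(t₁−t₀)·g(t₀) ≤ ∫_{t₀}^{t₁} g(τ) dτ ≤ (m−1)·t₀^{−1/(m−1)}·t^{m/(m−1)}·g(t). -/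
open Set Filter MeasureTheory

/-- formula (9.2), Step 3 Claim in the Appendix of the paper:
if `m > 1` and `g ≥ 0` is measurable with `t ↦ t^{m/(m-1)} g(t)` nondecreasing on
`(0,∞)`, then for all `0 < t₀ ≤ t₁ ≤ t`,
`(t₀/t₁)^{m/(m-1)} (t₁−t₀) g(t₀) ≤ ∫_{t₀}^{t₁} g ≤ (m−1) t₀^{−1/(m−1)} t^{m/(m−1)} g(t)`. -/
theorem stmt7
    (m : ℝ) (hm : 1 < m)
    (g : ℝ → ℝ) (hgm : Measurable g)
    (hgnn : ∀ t : ℝ, 0 < t → 0 ≤ g t)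
    (hmono : MonotoneOn (fun t => t ^ (m / (m - 1)) * g t) (Ioi 0)) :
    ∀ t₀ t₁ t : ℝ, 0 < t₀ → t₀ ≤ t₁ → t₁ ≤ t →
      (t₀ / t₁) ^ (m / (m - 1)) * (t₁ - t₀) * g t₀ ≤ (∫ τ in t₀..t₁, g τ) ∧
      (∫ τ in t₀..t₁, g τ) ≤ (m - 1) * t₀ ^ (-(1 / (m - 1))) * t ^ (m / (m - 1)) * g t := by
  intro t₀ t₁ t ht₀ h01 h1t
  have hm1 : (0:ℝ) < m - 1 := by linarith
  set p := m / (m - 1) with hpdef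
  have hp1 : 1 < p := by rw [hpdef, lt_div_iff₀ hm1]; linarith
  have hp0 : 0 < p := by linarith
  have ht₁ : 0 < t₁ := lt_of_lt_of_le ht₀ h01
  have ht : 0 < t := lt_of_lt_of_le ht₁ h1t
  have hgt : 0 ≤ g t := hgnn t ht
  have htp : 0 < t ^ p := Real.rpow_pos_of_pos ht p
  -- pointwise bounds on [t₀, t₁]
  have key : ∀ τ ∈ Icc t₀ t₁,
      (t₀ / t₁) ^ p * g t₀ ≤ g τ ∧ g τ ≤ t ^ p * g t * τ ^ (-p) := by
    intro τ hτ
    have hτ0 : 0 < τ := lt_of_lt_of_le ht₀ hτ.1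
    have h1 : t₀ ^ p * g t₀ ≤ τ ^ p * g τ := hmono ht₀ hτ0 hτ.1
    have h2 : τ ^ p * g τ ≤ t ^ p * g t := hmono hτ0 ht (hτ.2.trans h1t)
    have hτp : 0 < τ ^ p := Real.rpow_pos_of_pos hτ0 p
    have h1nn : 0 ≤ τ ^ p * g τ := mul_nonneg hτp.le (hgnn τ hτ0)
    constructor
    · have h3 : τ ^ p ≤ t₁ ^ p := Real.rpow_le_rpow hτ0.le hτ.2 hp0.le
      have heq : (t₀ / t₁) ^ p * g t₀ = t₀ ^ p * g t₀ / t₁ ^ p := by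
        rw [Real.div_rpow ht₀.le ht₁.le]; ring
      rw [heq]
      calc t₀ ^ p * g t₀ / t₁ ^ p ≤ τ ^ p * g τ / t₁ ^ p := by
            exact (div_le_div_iff_of_pos_right (Real.rpow_pos_of_pos ht₁ p)).mpr h1
        _ ≤ τ ^ p * g τ / τ ^ p := by
            apply div_le_div_of_nonneg_left h1nn hτp h3
        _ = g τ := by field_simp
    · have : g τ = τ ^ p * g τ / τ ^ p := by field_simp
      rw [this, Real.rpow_neg hτ0.le]
      rw [div_le_iff₀ hτp]
      calc τ ^ p * g τ ≤ t ^ p * g t := h2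
        _ = t ^ p * g t * (τ ^ p)⁻¹ * τ ^ p := by field_simp
  -- integrability
  have h0uIcc : (0:ℝ) ∉ uIcc t₀ t₁ := by
    rw [uIcc_of_le h01]
    intro h; exact absurd h.1 (not_le.mpr ht₀)
  have hIrpow : IntervalIntegrable (fun τ : ℝ => τ ^ (-p)) volume t₀ t₁ :=
    intervalIntegral.intervalIntegrable_rpow (Or.inr h0uIcc)
  have hIupper : IntervalIntegrable (fun τ : ℝ => t ^ p * g t * τ ^ (-p)) volume t₀ t₁ :=
    hIrpow.const_mul _
  have hIg : IntervalIntegrable g volume t₀ t₁ := by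
    rw [intervalIntegrable_iff_integrableOn_Ioc_of_le h01]
    apply Integrable.mono' (g := fun τ : ℝ => t ^ p * g t * t₀ ^ (-p))
      (integrableOn_const measure_Ioc_lt_top.ne)
      (hgm.aestronglyMeasurable.restrict)
    filter_upwards [ae_restrict_mem measurableSet_Ioc] with τ hτ
    have hτ0 : 0 < τ := lt_trans ht₀ hτ.1
    rw [Real.norm_eq_abs, abs_of_nonneg (hgnn τ hτ0)]
    calc g τ ≤ t ^ p * g t * τ ^ (-p) := (key τ ⟨hτ.1.le, hτ.2⟩).2
      _ ≤ t ^ p * g t * t₀ ^ (-p) := by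
          apply mul_le_mul_of_nonneg_left _ (mul_nonneg htp.le hgt)
          rw [Real.rpow_neg hτ0.le, Real.rpow_neg ht₀.le]
          exact inv_anti₀ (Real.rpow_pos_of_pos ht₀ p)
            (Real.rpow_le_rpow ht₀.le hτ.1.le hp0.le)
  constructor
  · have hmono' : ∫ τ in t₀..t₁, (t₀ / t₁) ^ p * g t₀ ≤ ∫ τ in t₀..t₁, g τ :=
      intervalIntegral.integral_mono_on h01 intervalIntegrable_const hIg
        (fun τ hτ => (key τ hτ).1)
    rw [intervalIntegral.integral_const, smul_eq_mul] at hmono'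
    calc (t₀ / t₁) ^ p * (t₁ - t₀) * g t₀ = (t₁ - t₀) * ((t₀ / t₁) ^ p * g t₀) := by ring
      _ ≤ _ := hmono'
  · have hmono' : (∫ τ in t₀..t₁, g τ) ≤ ∫ τ in t₀..t₁, t ^ p * g t * τ ^ (-p) :=
      intervalIntegral.integral_mono_on h01 hIg hIupper (fun τ hτ => (key τ hτ).2)
    have hcalc : (∫ τ in t₀..t₁, t ^ p * g t * τ ^ (-p))
        = t ^ p * g t * ((t₁ ^ (-p + 1) - t₀ ^ (-p + 1)) / (-p + 1)) := by
      rw [intervalIntegral.integral_const_mul,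
        integral_rpow (Or.inr ⟨by linarith, h0uIcc⟩)]
    have hfin : t ^ p * g t * ((t₁ ^ (-p + 1) - t₀ ^ (-p + 1)) / (-p + 1))
        ≤ (m - 1) * t₀ ^ (-(1 / (m - 1))) * t ^ p * g t := by
      have hI : (t₁ ^ (-p + 1) - t₀ ^ (-p + 1)) / (-p + 1)
          ≤ (m - 1) * t₀ ^ (-(1 / (m - 1))) := by
        have hexp : -p + 1 = -(1 / (m - 1)) := by
          rw [hpdef]; field_simp; ring
        rw [hexp, div_le_iff_of_neg (by rw [← hexp]; linarith)]
        have h1nn : 0 ≤ t₁ ^ (-(1 / (m - 1))) := (Real.rpow_pos_of_pos ht₁ _).le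
        have hmul : (m - 1) * t₀ ^ (-(1 / (m - 1))) * (-(1 / (m - 1)))
            = -t₀ ^ (-(1 / (m - 1))) := by
          field_simp
        rw [← hexp] at hmul h1nn ⊢
        rw [hmul]; linarith
      calc t ^ p * g t * ((t₁ ^ (-p + 1) - t₀ ^ (-p + 1)) / (-p + 1))
          ≤ t ^ p * g t * ((m - 1) * t₀ ^ (-(1 / (m - 1)))) :=
            mul_le_mul_of_nonneg_left hI (mul_nonneg htp.le hgt)
        _ = (m - 1) * t₀ ^ (-(1 / (m - 1))) * t ^ p * g t := by ring
    calc (∫ τ in t₀..t₁, g τ) ≤ _ := hmono'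
      _ = _ := hcalc
      _ ≤ _ := hfin
end

section
/- Let Ω ⊆ ℝ^N be measurable with finite Lebesgue measure, K : Ω × Ω → [0,∞) measurable, F : [0,∞) → [0,∞) continuous and nondecreasing with F(0)=0, μ₀ ∈ (0,1) and m₀ = 1/(1−μ₀). Let u : (0,∞) × Ω → [0,∞) be measurable and assume: (i) for almost every x₀ ∈ Ω and all 0 < t₀ ≤ t₁, the quantities ∫_Ω u(tᵢ,x)K(x,x₀)dx are finite and satisfy ∫_Ω u(t₀,x)K(x,x₀)dx − ∫_Ω u(t₁,x)K(x,x₀)dx = ∫_{t₀}^{t₁} F(u(τ,x₀)) dτ; (ii) for almost every x ∈ Ω the map t ↦ t^{m₀/(m₀−1)}·F(u(t,x)) is nondecreasing on (0,∞). Then for almost every x₀ ∈ Ω and all 0 < t₀ ≤ t₁ ≤ t: ∫_Ω u(t₁,x)K(x,x₀)dx ≤ ∫_Ω u(t₀,x)K(x,x₀)dx, and (t₀/t₁)^{m₀/(m₀−1)}·(t₁−t₀)·F(u(t₀,x₀)) ≤ ∫_Ω [u(t₀,x) − u(t₁,x)]·K(x,x₀) dx ≤ (m₀−1)·t₀^{−1/(m₀−1)}·t^{m₀/(m₀−1)}·F(u(t,x₀)).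 -/
open Set Filter MeasureTheory

/-- Proposition 5.1 of the paper, pointwise estimates for weak
dual solutions: from the weak-dual integral identity (i) and the Crandall–Pierre
monotonicity (ii), one derives the monotonicity of the Green potentials and the
two-sided pointwise bound on `F(u)` in terms of the Green potential of the
difference `u(t₀) − u(t₁)`. -/
theorem stmt8
    (N : ℕ) (Ω : Set (EuclideanSpace ℝ (Fin N)))
    (hΩm : MeasurableSet Ω) (hΩfin : volume Ω < ⊤)
    (K : EuclideanSpace ℝ (Fin N) → EuclideanSpace ℝ (Fin N) → ℝ)
    (hKm : Measurable (Function.uncurry K))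
    (hKnn : ∀ x y, 0 ≤ K x y)
    (F : ℝ → ℝ) (hFcont : ContinuousOn F (Ici 0))
    (hFmono : MonotoneOn F (Ici 0)) (hF0 : F 0 = 0)
    (hFnn : ∀ r : ℝ, 0 ≤ r → 0 ≤ F r)
    (μ₀ m₀ : ℝ) (hμ₀ : 0 < μ₀) (hμ₀1 : μ₀ < 1) (hm₀ : m₀ = 1 / (1 - μ₀))
    (u : ℝ → EuclideanSpace ℝ (Fin N) → ℝ)
    (hum : Measurable (Function.uncurry u))
    (hunn : ∀ t x, 0 ≤ u t x)
    (hi : ∀ᵐ x₀ ∂(volume.restrict Ω), ∀ t₀ t₁ : ℝ, 0 < t₀ → t₀ ≤ t₁ →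
      IntegrableOn (fun x => u t₀ x * K x x₀) Ω ∧
      IntegrableOn (fun x => u t₁ x * K x x₀) Ω ∧
      (∫ x in Ω, u t₀ x * K x x₀) - (∫ x in Ω, u t₁ x * K x x₀)
        = ∫ τ in t₀..t₁, F (u τ x₀))
    (hii : ∀ᵐ x ∂(volume.restrict Ω),
      MonotoneOn (fun t => t ^ (m₀ / (m₀ - 1)) * F (u t x)) (Ioi 0)) :
    ∀ᵐ x₀ ∂(volume.restrict Ω), ∀ t₀ t₁ t : ℝ, 0 < t₀ → t₀ ≤ t₁ → t₁ ≤ t →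
      (∫ x in Ω, u t₁ x * K x x₀) ≤ (∫ x in Ω, u t₀ x * K x x₀) ∧
      (t₀ / t₁) ^ (m₀ / (m₀ - 1)) * (t₁ - t₀) * F (u t₀ x₀)
        ≤ (∫ x in Ω, (u t₀ x - u t₁ x) * K x x₀) ∧
      (∫ x in Ω, (u t₀ x - u t₁ x) * K x x₀)
        ≤ (m₀ - 1) * t₀ ^ (-(1 / (m₀ - 1))) * t ^ (m₀ / (m₀ - 1)) * F (u t x₀) := by
  -- basic facts about the exponents
  have h1μ : 0 < 1 - μ₀ := by linarith
  have hm1 : 1 < m₀ := by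
    rw [hm₀]; exact one_lt_one_div h1μ (by linarith)
  have hm0' : 0 < m₀ - 1 := by linarith
  set γ : ℝ := m₀ / (m₀ - 1) with hγdef
  have hγ1 : 1 < γ := by
    rw [hγdef]; rw [lt_div_iff₀ hm0']; linarith
  have hγpos : 0 < γ := by linarith
  have hγm : γ - 1 = 1 / (m₀ - 1) := by
    rw [hγdef]; field_simp; ring
  filter_upwards [hi, hii] with x₀ hx1 hx2
  intro t₀ t₁ t ht₀ h01 h1t
  have ht₁ : 0 < t₁ := ht₀.trans_le h01
  have ht : 0 < t := ht₁.trans_le h1t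
  obtain ⟨hI0, hI1, hkey⟩ := hx1 t₀ t₁ ht₀ h01
  -- measurability of τ ↦ F (u τ x₀)
  have hres : Measurable ((Ici (0:ℝ)).restrict F) :=
    (continuousOn_iff_continuous_restrict.mp hFcont).measurable
  have hu : Measurable (fun τ => u τ x₀) :=
    hum.comp (measurable_id.prodMk measurable_const)
  have hFmeas : Measurable (fun τ => F (u τ x₀)) := by
    have : (fun τ => F (u τ x₀))
        = ((Ici (0:ℝ)).restrict F) ∘ (fun τ => (⟨u τ x₀, hunn τ x₀⟩ : Ici (0:ℝ))) := rfl
    rw [this]; exact hres.comp (hu.subtype_mk)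
  -- monotonicity consequences
  have hmono : ∀ a b : ℝ, 0 < a → a ≤ b →
      a ^ γ * F (u a x₀) ≤ b ^ γ * F (u b x₀) := fun a b ha hab =>
    hx2 (mem_Ioi.2 ha) (mem_Ioi.2 (ha.trans_le hab)) hab
  -- the interval integral as a set integral
  rw [intervalIntegral.integral_of_le h01] at hkey
  -- integrability of F ∘ u on Ioc t₀ t₁
  have hbdd : ∀ τ ∈ Ioc t₀ t₁,
      F (u τ x₀) ≤ t₁ ^ γ * F (u t₁ x₀) / t₀ ^ γ := by
    intro τ hτ
    have hτ0 : 0 < τ := ht₀.trans hτ.1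
    have h1 := hmono τ t₁ hτ0 hτ.2
    have h2 : t₀ ^ γ * F (u τ x₀) ≤ τ ^ γ * F (u τ x₀) :=
      mul_le_mul_of_nonneg_right
        (Real.rpow_le_rpow ht₀.le hτ.1.le hγpos.le) (hFnn _ (hunn _ _))
    rw [le_div_iff₀ (Real.rpow_pos_of_pos ht₀ γ)]
    nlinarith
  have hIF : IntegrableOn (fun τ => F (u τ x₀)) (Ioc t₀ t₁) := by
    apply Measure.integrableOn_of_bounded
      (M := t₁ ^ γ * F (u t₁ x₀) / t₀ ^ γ)
      (by simp [(measure_Ioc_lt_top (a := t₀) (b := t₁)).ne]) hFmeas.aestronglyMeasurable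
    refine (ae_restrict_iff' measurableSet_Ioc).2 (ae_of_all _ fun τ hτ => ?_)
    rw [Real.norm_eq_abs, abs_of_nonneg (hFnn _ (hunn _ _))]
    exact hbdd τ hτ
  -- first claim
  have hFint_nonneg : 0 ≤ ∫ τ in Ioc t₀ t₁, F (u τ x₀) :=
    setIntegral_nonneg measurableSet_Ioc fun τ _ => hFnn _ (hunn _ _)
  have claim1 : (∫ x in Ω, u t₁ x * K x x₀) ≤ (∫ x in Ω, u t₀ x * K x x₀) := by
    linarith
  refine ⟨claim1, ?_, ?_⟩
  -- rewrite the difference integral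
  all_goals
    have hsub : (∫ x in Ω, (u t₀ x - u t₁ x) * K x x₀)
        = (∫ x in Ω, u t₀ x * K x x₀) - (∫ x in Ω, u t₁ x * K x x₀) := by
      simp_rw [sub_mul]; exact integral_sub hI0 hI1
    rw [hsub, hkey]
  · -- lower bound
    have hlow : ∀ τ ∈ Ioc t₀ t₁,
        (t₀ / t₁) ^ γ * F (u t₀ x₀) ≤ F (u τ x₀) := by
      intro τ hτ
      have hτ0 : 0 < τ := ht₀.trans hτ.1
      have h1 := hmono t₀ τ ht₀ hτ.1.le
      have hτγ : 0 < τ ^ γ := Real.rpow_pos_of_pos hτ0 γ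
      have h3 : (t₀ / t₁) ^ γ = t₀ ^ γ / t₁ ^ γ := Real.div_rpow ht₀.le ht₁.le γ
      have h4 : t₀ ^ γ / t₁ ^ γ * F (u t₀ x₀) ≤ t₀ ^ γ / τ ^ γ * F (u t₀ x₀) := by
        apply mul_le_mul_of_nonneg_right _ (hFnn _ (hunn _ _))
        exact div_le_div_of_nonneg_left (Real.rpow_pos_of_pos ht₀ γ).le hτγ
          (Real.rpow_le_rpow hτ0.le hτ.2 hγpos.le)
      have h5 : t₀ ^ γ / τ ^ γ * F (u t₀ x₀) ≤ F (u τ x₀) := by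
        rw [div_mul_eq_mul_div, div_le_iff₀ hτγ]
        nlinarith
      rw [h3]; linarith
    calc (t₀ / t₁) ^ γ * (t₁ - t₀) * F (u t₀ x₀)
        = ∫ _ in Ioc t₀ t₁, (t₀ / t₁) ^ γ * F (u t₀ x₀) := by
          rw [setIntegral_const, Real.volume_real_Ioc_of_le h01, smul_eq_mul]
          ring
      _ ≤ ∫ τ in Ioc t₀ t₁, F (u τ x₀) :=
          setIntegral_mono_on
            (integrableOn_const measure_Ioc_lt_top.ne) hIF
            measurableSet_Ioc hlow
  · -- upper bound
    set C : ℝ := t ^ γ * F (u t x₀) with hC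
    have hCnn : 0 ≤ C := mul_nonneg (Real.rpow_pos_of_pos ht γ).le (hFnn _ (hunn _ _))
    have hup : ∀ τ ∈ Ioc t₀ t₁, F (u τ x₀) ≤ C * τ ^ (-γ) := by
      intro τ hτ
      have hτ0 : 0 < τ := ht₀.trans hτ.1
      have h1 := hmono τ t hτ0 (hτ.2.trans h1t)
      have hτγ : 0 < τ ^ γ := Real.rpow_pos_of_pos hτ0 γ
      rw [Real.rpow_neg hτ0.le, ← div_eq_mul_inv, le_div_iff₀ hτγ]
      nlinarith
    have hIC : IntegrableOn (fun τ : ℝ => C * τ ^ (-γ)) (Ioc t₀ t₁) := by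
      have hcont : ContinuousOn (fun τ : ℝ => C * τ ^ (-γ)) (Icc t₀ t₁) :=
        continuousOn_const.mul (continuousOn_id.rpow_const fun x hx =>
          Or.inl (ne_of_gt (lt_of_lt_of_le ht₀ hx.1)))
      exact (hcont.integrableOn_compact isCompact_Icc).mono_set Ioc_subset_Icc_self
    have step1 : (∫ τ in Ioc t₀ t₁, F (u τ x₀)) ≤ ∫ τ in Ioc t₀ t₁, C * τ ^ (-γ) :=
      setIntegral_mono_on hIF hIC measurableSet_Ioc hup
    have step2 : (∫ τ in Ioc t₀ t₁, C * τ ^ (-γ))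
        = C * ((t₁ ^ (-γ + 1) - t₀ ^ (-γ + 1)) / (-γ + 1)) := by
      rw [← intervalIntegral.integral_of_le h01, intervalIntegral.integral_const_mul,
        integral_rpow (Or.inr ⟨by intro h; rw [neg_eq_iff_eq_neg] at h; linarith,
          notMem_uIcc_of_lt ht₀ ht₁⟩)]
    have hA : (0:ℝ) < t₀ ^ (-γ + 1) := Real.rpow_pos_of_pos ht₀ _
    have hB : (0:ℝ) < t₁ ^ (-γ + 1) := Real.rpow_pos_of_pos ht₁ _
    have step3 : C * ((t₁ ^ (-γ + 1) - t₀ ^ (-γ + 1)) / (-γ + 1))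
        ≤ (m₀ - 1) * t₀ ^ (-(1 / (m₀ - 1))) * t ^ γ * F (u t x₀) := by
      have hexp : -(1 / (m₀ - 1)) = -γ + 1 := by rw [← hγm]; ring
      rw [hexp]
      have hd : 0 < γ - 1 := by linarith
      have h6 : (t₁ ^ (-γ + 1) - t₀ ^ (-γ + 1)) / (-γ + 1)
          = (t₀ ^ (-γ + 1) - t₁ ^ (-γ + 1)) / (γ - 1) := by
        rw [div_eq_div_iff (by linarith) (by linarith)]; ring
      rw [h6]
      have h7 : (t₀ ^ (-γ + 1) - t₁ ^ (-γ + 1)) / (γ - 1) ≤ t₀ ^ (-γ + 1) / (γ - 1) := by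
        gcongr
        linarith
      have h8 : C * ((t₀ ^ (-γ + 1) - t₁ ^ (-γ + 1)) / (γ - 1)) ≤ C * (t₀ ^ (-γ + 1) / (γ - 1)) :=
        mul_le_mul_of_nonneg_left h7 hCnn
      have h9 : C * (t₀ ^ (-γ + 1) / (γ - 1)) = (m₀ - 1) * t₀ ^ (-γ + 1) * t ^ γ * F (u t x₀) := by
        have : γ - 1 = 1 / (m₀ - 1) := hγm
        rw [hC, this]
        field_simp
      linarith
    linarith [step1, step2 ▸ step1, step3]
end

section
/- Let Ω ⊆ ℝ^N have finite Lebesgue measure, and let K : Ω × Ω → [0,∞) be measurable with ∫_Ω K(x,x₀) dx ≤ c₂ for every x₀ ∈ Ω. Let F : [0,∞) → [0,∞) be continuous and nondecreasing with F(0)=0, and set F*(z) := sup_{r ≥ 0} (z·r − F(r)). Let t > 0, C > 0, and let u : Ω → [0,∞) be measurable and essentially bounded with F(u(x₀)) ≤ (C/t)·∫_Ω u(x)K(x,x₀) dx for almost every x₀ ∈ Ω. Assume F*(2Cc₂/t) < ∞. Then F(‖u‖_{L∞(Ω)}) ≤ F*(2Cc₂/t), where ‖u‖_{L∞(Ω)}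 denotes the essential supremum of u. -/
open Set Filter MeasureTheory

/-- core of Theorem 5.2, inequality (5.2) of the paper: the
fundamental upper estimate `F(u(x₀)) ≤ (C/t) ∫_Ω u K(·,x₀)` together with the
uniform bound `∫_Ω K(x,x₀) dx ≤ c₂` and the Fenchel–Young inequality yields the
absolute bound `F(‖u‖_∞) ≤ F*(2Cc₂/t)` for the Legendre transform
`F*(z) = sup_{r ≥ 0}(zr − F(r))`. -/
theorem stmt9
    (N : ℕ) (Ω : Set (EuclideanSpace ℝ (Fin N)))
    (hΩm : MeasurableSet Ω) (hΩfin : volume Ω < ⊤)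
    (K : EuclideanSpace ℝ (Fin N) → EuclideanSpace ℝ (Fin N) → ℝ)
    (hKm : Measurable (Function.uncurry K))
    (hKnn : ∀ x y, 0 ≤ K x y)
    (c₂ : ℝ)
    (hc₂ : ∀ x₀ ∈ Ω, ∫⁻ x in Ω, ENNReal.ofReal (K x x₀) ≤ ENNReal.ofReal c₂)
    (F : ℝ → ℝ) (hFcont : ContinuousOn F (Ici 0))
    (hFmono : MonotoneOn F (Ici 0)) (hF0 : F 0 = 0)
    (hFnn : ∀ r : ℝ, 0 ≤ r → 0 ≤ F r)
    (Fstar : ℝ → ℝ)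
    (hFstar : ∀ z : ℝ, Fstar z = sSup {y : ℝ | ∃ r : ℝ, 0 ≤ r ∧ y = z * r - F r})
    (t C : ℝ) (ht : 0 < t) (hC : 0 < C)
    (u : EuclideanSpace ℝ (Fin N) → ℝ) (hum : Measurable u)
    (hunn : ∀ x ∈ Ω, 0 ≤ u x)
    (hbdd : ∃ M : ℝ, ∀ᵐ x ∂(volume.restrict Ω), u x ≤ M)
    (hmain : ∀ᵐ x₀ ∂(volume.restrict Ω),
      F (u x₀) ≤ (C / t) * ∫ x in Ω, u x * K x x₀)
    (hfin : BddAbove {y : ℝ | ∃ r : ℝ, 0 ≤ r ∧ y = (2 * C * c₂ / t) * r - F r}) :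
    F (essSup u (volume.restrict Ω)) ≤ Fstar (2 * C * c₂ / t) := by
  set μ := volume.restrict Ω with hμdef
  have hFstar_ge : ∀ r : ℝ, 0 ≤ r → (2 * C * c₂ / t) * r - F r ≤ Fstar (2 * C * c₂ / t) := by
    intro r hr
    rw [hFstar]
    exact le_csSup hfin ⟨r, hr, rfl⟩
  have hFstar0 : 0 ≤ Fstar (2 * C * c₂ / t) := by
    have := hFstar_ge 0 le_rfl
    simpa [hF0] using this
  by_cases hμ0 : μ = 0
  · have hS : essSup u μ = 0 := by
      unfold essSup
      have : ae μ = ⊥ := by rw [hμ0]; simp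
      rw [this, Filter.limsup_eq]
      simp only [eventually_bot, Set.setOf_true]
      exact Real.sInf_of_not_bddBelow (by simpa using not_bddBelow_univ (α := ℝ))
    rw [hS, hF0]
    exact hFstar0
  -- main case
  have hne : (ae μ).NeBot := ae_neBot.mpr hμ0
  obtain ⟨M, hM⟩ := hbdd
  have hbU : IsBoundedUnder (· ≤ ·) (ae μ) u := ⟨M, by simpa [Filter.eventually_map] using hM⟩
  have h0 : ∀ᵐ x ∂μ, 0 ≤ u x := (ae_restrict_mem hΩm).mono fun x hx => hunn x hx
  have hco : IsCoboundedUnder (· ≤ ·) (ae μ) u :=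
    Filter.IsBoundedUnder.isCoboundedUnder_le ⟨0, by simpa [Filter.eventually_map] using h0⟩
  set S := essSup u μ with hSdef
  have hS0 : 0 ≤ S := le_limsup_of_frequently_le (h0.frequently) hbU
  have hUle : ∀ᵐ x ∂μ, u x ≤ S := ae_le_essSup hbU
  set c := max c₂ 0 with hcdef
  have hc0 : 0 ≤ c := le_max_right _ _
  -- integral bound
  have hint : ∀ x₀ ∈ Ω, ∫ x in Ω, u x * K x x₀ ≤ S * c := by
    intro x₀ hx₀
    have hKmx : Measurable fun x => K x x₀ :=
      hKm.comp (measurable_id.prodMk measurable_const)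
    have h1 : ∫ x in Ω, u x * K x x₀
        = (∫⁻ x in Ω, ENNReal.ofReal (u x * K x x₀)).toReal :=
      integral_eq_lintegral_of_nonneg_ae
        (h0.mono fun x hx => mul_nonneg hx (hKnn x x₀))
        ((hum.mul hKmx).aestronglyMeasurable)
    have h2 : (∫⁻ x in Ω, ENNReal.ofReal (u x * K x x₀))
        ≤ ENNReal.ofReal S * ENNReal.ofReal c := by
      calc ∫⁻ x in Ω, ENNReal.ofReal (u x * K x x₀)
          ≤ ∫⁻ x in Ω, ENNReal.ofReal S * ENNReal.ofReal (K x x₀) := by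
            refine lintegral_mono_ae ?_
            filter_upwards [h0, hUle] with x hx hxS
            rw [ENNReal.ofReal_mul hx]
            exact mul_le_mul_left (ENNReal.ofReal_le_ofReal hxS) _
        _ = ENNReal.ofReal S * ∫⁻ x in Ω, ENNReal.ofReal (K x x₀) :=
            lintegral_const_mul _ hKmx.ennreal_ofReal
        _ ≤ ENNReal.ofReal S * ENNReal.ofReal c := by
            exact mul_le_mul_right
              ((hc₂ x₀ hx₀).trans (ENNReal.ofReal_le_ofReal (le_max_left _ _))) _
    rw [h1]
    have h3 := ENNReal.toReal_mono
      (by exact ENNReal.mul_ne_top ENNReal.ofReal_ne_top ENNReal.ofReal_ne_top) h2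
    calc (∫⁻ x in Ω, ENNReal.ofReal (u x * K x x₀)).toReal
        ≤ (ENNReal.ofReal S * ENNReal.ofReal c).toReal := h3
      _ = S * c := by
          rw [ENNReal.toReal_mul, ENNReal.toReal_ofReal hS0, ENNReal.toReal_ofReal hc0]
  -- F S ≤ (C/t) * (S * c)
  have hFS : F S ≤ (C / t) * (S * c) := by
    by_contra hlt
    push_neg at hlt
    rcases eq_or_lt_of_le hS0 with hSe | hSpos
    · rw [← hSe, hF0] at hlt
      simp at hlt
    · have hcont : ContinuousWithinAt F (Ici 0) S := hFcont S hS0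
      have hev : ∀ᶠ y in nhdsWithin S (Ici 0), (C / t) * (S * c) < F y :=
        hcont (eventually_gt_nhds hlt)
      have hmono : nhdsWithin S (Ico 0 S) ≤ nhdsWithin S (Ici 0) :=
        nhdsWithin_mono S (Ico_subset_Ici_self)
      have hnb : (nhdsWithin S (Ico 0 S)).NeBot := by
        rw [← mem_closure_iff_nhdsWithin_neBot, closure_Ico hSpos.ne]
        exact ⟨hS0, le_rfl⟩
      obtain ⟨y, hyF, hy0, hyS⟩ :
          ∃ y, ((C / t) * (S * c) < F y) ∧ 0 ≤ y ∧ y < S := by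
        have := (hev.filter_mono hmono).and self_mem_nhdsWithin
        obtain ⟨y, h1, h2⟩ := this.exists
        exact ⟨y, h1, h2.1, h2.2⟩
      -- positive measure of {u > y}
      have hfreq : ∃ᶠ x in ae μ, y < u x := by
        rw [frequently_ae_iff]
        intro hz
        have hle : ∀ᵐ x ∂μ, u x ≤ y := by
          rw [ae_iff]
          simpa [not_le] using hz
        have : S ≤ y := limsup_le_of_le hco hle
        linarith
      have hae : ∀ᵐ x ∂μ, (F (u x) ≤ (C / t) * ∫ z in Ω, u z * K z x) ∧ x ∈ Ω :=
        hmain.and (ae_restrict_mem hΩm)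
      obtain ⟨x₀, hx₀y, hx₀main, hx₀Ω⟩ :
          ∃ x₀, y < u x₀ ∧ (F (u x₀) ≤ (C / t) * ∫ z in Ω, u z * K z x₀) ∧ x₀ ∈ Ω := by
        obtain ⟨x₀, h1, h2, h3⟩ := (hfreq.and_eventually hae).exists
        exact ⟨x₀, h1, h2, h3⟩
      have hux₀0 : (0:ℝ) ≤ u x₀ := hy0.trans hx₀y.le
      have hFy : F y ≤ F (u x₀) := hFmono hy0 hux₀0 hx₀y.le
      have hle2 : (C / t) * ∫ z in Ω, u z * K z x₀ ≤ (C / t) * (S * c) :=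
        mul_le_mul_of_nonneg_left (hint x₀ hx₀Ω) (div_nonneg hC.le ht.le)
      linarith
  -- conclude
  rcases le_or_gt 0 c₂ with hc₂0 | hc₂0
  · have hcc : c = c₂ := max_eq_left hc₂0
    rw [hcc] at hFS
    have key : F S ≤ 2 * C * c₂ / t * S - F S := by
      have : 2 * C * c₂ / t * S = 2 * ((C / t) * (S * c₂)) := by ring
      linarith [this ▸ (by linarith [hFS] : (2:ℝ) * F S ≤ 2 * ((C / t) * (S * c₂)))]
    exact key.trans (hFstar_ge S hS0)
  · have hcc : c = 0 := max_eq_right hc₂0.le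
    rw [hcc] at hFS
    simp at hFS
    exact hFS.trans hFstar0
end

section
/- Let Ω ⊂ ℝ^N be a bounded open set with weight φ(x) := dist(x, ∂Ω)^γ for some γ ∈ (0,1], let m₀ > 1, θ > 0, s > 0, K₇ > 0, and let u : (0,∞) × Ω → [0,∞) be measurable such that t ↦ t^{1/(m₀−1)}·u(t,x) is nondecreasing for almost every x ∈ Ω. Fix t > 0 and suppose the smoothing bound ‖u(t)‖_{L∞(Ω)} ≤ K₇·‖u(t)‖_{L¹_φ(Ω)}^{2sθ} / t^{(N+γ)θ} holds. Then for every h > 0 the backward smoothing bound holds: ‖u(t)‖_{L∞(Ω)} ≤ K₇·((t+h)/t)^{2sθ/(m₀−1)}·‖u(t+h)‖_{L¹_φ(Ω)}^{2sθ} / t^{(N+γ)θ}. -/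
open Set Filter MeasureTheory

/-- Corollary 6.3 of the paper, backward smoothing effect: the
Bénilan–Crandall monotonicity `t ↦ t^{1/(m₀-1)} u(t,x)` nondecreasing converts the
instantaneous smoothing bound
`‖u(t)‖_∞ ≤ K₇ ‖u(t)‖_{L¹_φ}^{2sθ} / t^{(N+γ)θ}` into the backward bound
`‖u(t)‖_∞ ≤ K₇ ((t+h)/t)^{2sθ/(m₀-1)} ‖u(t+h)‖_{L¹_φ}^{2sθ} / t^{(N+γ)θ}`
for every `h > 0`, where `φ(x) = dist(x,∂Ω)^γ`. -/
theorem stmt14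
    (N : ℕ) (γ : ℝ) (hγ0 : 0 < γ) (hγ1 : γ ≤ 1)
    (Ω : Set (EuclideanSpace ℝ (Fin N)))
    (hΩo : IsOpen Ω) (hΩb : Bornology.IsBounded Ω)
    (phi : EuclideanSpace ℝ (Fin N) → ℝ)
    (hphi : ∀ x, phi x = Metric.infDist x (frontier Ω) ^ γ)
    (m₀ θ s K₇ : ℝ) (hm₀ : 1 < m₀) (hθ : 0 < θ) (hs : 0 < s) (hK₇ : 0 < K₇)
    (u : ℝ → EuclideanSpace ℝ (Fin N) → ℝ)
    (hum : Measurable (Function.uncurry u))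
    (hunn : ∀ t : ℝ, 0 < t → ∀ x, 0 ≤ u t x)
    (huint : ∀ t : ℝ, 0 < t → IntegrableOn (fun x => u t x * phi x) Ω)
    (hmono : ∀ᵐ x ∂(volume.restrict Ω),
      MonotoneOn (fun t => t ^ (1 / (m₀ - 1)) * u t x) (Ioi 0))
    (t : ℝ) (ht : 0 < t)
    (hsmooth : essSup (u t) (volume.restrict Ω)
      ≤ K₇ * (∫ x in Ω, u t x * phi x) ^ (2 * s * θ) / t ^ (((N : ℝ) + γ) * θ)) :
    ∀ h : ℝ, 0 < h →
      essSup (u t) (volume.restrict Ω)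
        ≤ K₇ * ((t + h) / t) ^ (2 * s * θ / (m₀ - 1))
            * (∫ x in Ω, u (t + h) x * phi x) ^ (2 * s * θ)
            / t ^ (((N : ℝ) + γ) * θ) := by
  intro h hh
  set e : ℝ := 1 / (m₀ - 1) with he
  have hm : 0 < m₀ - 1 := by linarith
  have he0 : 0 < e := by rw [he]; exact div_pos one_pos hm
  have hth : 0 < t + h := by linarith
  set c : ℝ := ((t + h) / t) ^ e with hc
  have hc0 : 0 ≤ c := Real.rpow_nonneg (div_nonneg hth.le ht.le) e
  have hphinn : ∀ x, 0 ≤ phi x := fun x => by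
    rw [hphi x]; exact Real.rpow_nonneg Metric.infDist_nonneg γ
  -- pointwise a.e. comparison
  have hpt : ∀ᵐ x ∂(volume.restrict Ω),
      u t x * phi x ≤ c * (u (t + h) x * phi x) := by
    filter_upwards [hmono] with x hx
    have h1 : t ^ e * u t x ≤ (t + h) ^ e * u (t + h) x :=
      hx (mem_Ioi.2 ht) (mem_Ioi.2 hth) (by linarith)
    have hte : (0:ℝ) < t ^ e := Real.rpow_pos_of_pos ht e
    have h2 : u t x ≤ c * u (t + h) x := by
      rw [hc, Real.div_rpow (le_of_lt hth) (le_of_lt ht)]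
      rw [div_mul_eq_mul_div, le_div_iff₀ hte, mul_comm (u t x)]
      linarith [h1]
    calc u t x * phi x ≤ (c * u (t + h) x) * phi x :=
          mul_le_mul_of_nonneg_right h2 (hphinn x)
      _ = c * (u (t + h) x * phi x) := by ring
  -- integral comparison
  have hint : (∫ x in Ω, u t x * phi x) ≤ c * (∫ x in Ω, u (t + h) x * phi x) := by
    rw [← integral_const_mul]
    exact integral_mono_ae (huint t ht) ((huint (t + h) hth).const_mul c) hpt
  have hA : 0 ≤ ∫ x in Ω, u t x * phi x :=
    integral_nonneg fun x => mul_nonneg (hunn t ht x) (hphinn x)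
  have hB : 0 ≤ ∫ x in Ω, u (t + h) x * phi x :=
    integral_nonneg fun x => mul_nonneg (hunn (t + h) hth x) (hphinn x)
  have hp : 0 ≤ 2 * s * θ := by positivity
  have hrpow : (∫ x in Ω, u t x * phi x) ^ (2 * s * θ)
      ≤ ((t + h) / t) ^ (2 * s * θ / (m₀ - 1))
        * (∫ x in Ω, u (t + h) x * phi x) ^ (2 * s * θ) := by
    calc (∫ x in Ω, u t x * phi x) ^ (2 * s * θ)
        ≤ (c * (∫ x in Ω, u (t + h) x * phi x)) ^ (2 * s * θ) :=
          Real.rpow_le_rpow hA hint hp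
      _ = c ^ (2 * s * θ) * (∫ x in Ω, u (t + h) x * phi x) ^ (2 * s * θ) :=
          Real.mul_rpow hc0 hB
      _ = ((t + h) / t) ^ (2 * s * θ / (m₀ - 1))
            * (∫ x in Ω, u (t + h) x * phi x) ^ (2 * s * θ) := by
          rw [hc, ← Real.rpow_mul (by positivity : (0:ℝ) ≤ (t+h)/t)]
          congr 1
          rw [he]; ring
  have htq : 0 < t ^ (((N : ℝ) + γ) * θ) := Real.rpow_pos_of_pos ht _
  refine hsmooth.trans ?_
  rw [div_le_div_iff₀ htq htq]
  have := mul_le_mul_of_nonneg_left hrpow (le_of_lt hK₇)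
  nlinarith [htq, this]
end

section
/- Let Ω ⊆ ℝ^N have finite Lebesgue measure, let Φ : Ω → [0,∞) be integrable, λ > 0, and let F : [0,∞) → [0,∞) be nondecreasing. Let u, v : [0,∞) × Ω → [0,∞) be measurable with v(t,x) ≤ u(t,x) for all t and almost every x, with u(t,·), v(t,·) ∈ L¹(Ω, Φ dx). Assume that for all 0 ≤ t₀ ≤ t₁: ∫_Ω [u(t₀,x)−v(t₀,x)]Φ(x) dx − ∫_Ω [u(t₁,x)−v(t₁,x)]Φ(x) dx = λ·∫_{t₀}^{t₁} ∫_Ω [F(u(τ,x)) − F(v(τ,x))]·Φ(x) dx dτ. Then: (i) the map t ↦ ∫_Ω [u(t,x)−v(t,x)]Φ(x) dx is nonincreasing on [0,∞); (ii) if moreover there exist A > 0, β ∈ (0,1) and τ₀ ≥ 0 such that F(u(τ,x)) − F(v(τ,x)) ≤ A·τ^{−β}·(u(τ,x) − v(τ,x)) for almost every x ∈ Ω and all τ ≥ τ₀ (τ > 0), then for all τ₀ ≤ t₀ ≤ t₁: 0 ≤ ∫_Ω [u(t₀,x)−v(t₀,x)]Φ dx − ∫_Ω [u(t₁,x)−v(t₁,x)]Φ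 dx ≤ (λA/(1−β))·(t₁−t₀)^{1−β}·∫_Ω [u(τ₀,x)−v(τ₀,x)]Φ(x) dx. -/
open Set Filter MeasureTheory

lemma real_rpow_sub_le {x y p : ℝ} (hx : 0 ≤ x) (hxy : x ≤ y) (hp : 0 ≤ p) (hp1 : p ≤ 1) :
    y ^ p - x ^ p ≤ (y - x) ^ p := by
  have hyx : 0 ≤ y - x := by linarith
  have key : (x + (y - x)) ^ p ≤ x ^ p + (y - x) ^ p := by
    have h := NNReal.rpow_add_le_add_rpow (⟨x, hx⟩ : NNReal) (⟨y - x, hyx⟩ : NNReal) hp hp1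
    have h2 := NNReal.coe_le_coe.mpr h
    exact h2
  have hxy2 : x + (y - x) = y := by ring
  rw [hxy2] at key
  linarith

/-- Proposition 7.1, formulas (7.1)–(7.2) of the paper, weighted
`L¹` estimates for ordered pairs of solutions: from the weak-dual identity with
weight `Φ` one gets (i) the monotonicity in time of `∫ (u−v) Φ`, and (ii) under
the pointwise bound `F(u)−F(v) ≤ A τ^{-β} (u−v)`, the quantitative weighted `L¹`
estimate with exponent `1−β`. -/
theorem stmt15
    (N : ℕ) (Ω : Set (EuclideanSpace ℝ (Fin N)))
    (hΩm : MeasurableSet Ω) (hΩfin : volume Ω < ⊤)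
    (Φ : EuclideanSpace ℝ (Fin N) → ℝ)
    (hΦnn : ∀ x, 0 ≤ Φ x) (hΦint : IntegrableOn Φ Ω)
    (lam : ℝ) (hlam : 0 < lam)
    (F : ℝ → ℝ) (hFmono : MonotoneOn F (Ici 0))
    (hFnn : ∀ r : ℝ, 0 ≤ r → 0 ≤ F r)
    (u v : ℝ → EuclideanSpace ℝ (Fin N) → ℝ)
    (hord : ∀ t : ℝ, ∀ᵐ x ∂(volume.restrict Ω), 0 ≤ v t x ∧ v t x ≤ u t x)
    (hint : ∀ t : ℝ, IntegrableOn (fun x => u t x * Φ x) Ω ∧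
      IntegrableOn (fun x => v t x * Φ x) Ω)
    (hid : ∀ t₀ t₁ : ℝ, 0 ≤ t₀ → t₀ ≤ t₁ →
      (∫ x in Ω, (u t₀ x - v t₀ x) * Φ x) - (∫ x in Ω, (u t₁ x - v t₁ x) * Φ x)
        = lam * ∫ τ in t₀..t₁, ∫ x in Ω, (F (u τ x) - F (v τ x)) * Φ x) :
    AntitoneOn (fun t => ∫ x in Ω, (u t x - v t x) * Φ x) (Ici 0) ∧
    (∀ A β τ₀ : ℝ, 0 < A → 0 < β → β < 1 → 0 ≤ τ₀ →
      (∀ᵐ x ∂(volume.restrict Ω), ∀ τ : ℝ, τ₀ ≤ τ → 0 < τ →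
        F (u τ x) - F (v τ x) ≤ A * τ ^ (-β) * (u τ x - v τ x)) →
      ∀ t₀ t₁ : ℝ, τ₀ ≤ t₀ → t₀ ≤ t₁ →
        0 ≤ (∫ x in Ω, (u t₀ x - v t₀ x) * Φ x)
              - (∫ x in Ω, (u t₁ x - v t₁ x) * Φ x) ∧
        (∫ x in Ω, (u t₀ x - v t₀ x) * Φ x)
              - (∫ x in Ω, (u t₁ x - v t₁ x) * Φ x)
          ≤ (lam * A / (1 - β)) * (t₁ - t₀) ^ (1 - β)
              * ∫ x in Ω, (u τ₀ x - v τ₀ x) * Φ x) := by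
  have hgnn : ∀ τ : ℝ, 0 ≤ ∫ x in Ω, (F (u τ x) - F (v τ x)) * Φ x := by
    intro τ
    apply integral_nonneg_of_ae
    filter_upwards [hord τ] with x hx
    have h1 : F (v τ x) ≤ F (u τ x) :=
      hFmono (mem_Ici.mpr hx.1) (mem_Ici.mpr (hx.1.trans hx.2)) hx.2
    have := hΦnn x
    show (0:ℝ) ≤ _
    nlinarith
  have hanti : AntitoneOn (fun t => ∫ x in Ω, (u t x - v t x) * Φ x) (Ici 0) := by
    intro s hs t ht hst
    have hkey := hid s t hs hst
    have hnn : 0 ≤ ∫ τ in s..t, ∫ x in Ω, (F (u τ x) - F (v τ x)) * Φ x :=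
      intervalIntegral.integral_nonneg hst (fun τ _ => hgnn τ)
    simp only
    nlinarith
  refine ⟨hanti, ?_⟩
  intro A β τ₀ hA hβ hβ1 hτ₀ hpt t₀ t₁ ht₀ ht₀₁
  have ht₀0 : 0 ≤ t₀ := hτ₀.trans ht₀
  have hkey := hid t₀ t₁ ht₀0 ht₀₁
  set C := ∫ x in Ω, (u τ₀ x - v τ₀ x) * Φ x with hCdef
  have hC : 0 ≤ C := by
    apply integral_nonneg_of_ae
    filter_upwards [hord τ₀] with x hx
    have := hΦnn x
    show (0:ℝ) ≤ _
    nlinarith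
  have hIC : ∀ τ : ℝ, τ₀ ≤ τ → (∫ x in Ω, (u τ x - v τ x) * Φ x) ≤ C :=
    fun τ hτ => hanti (mem_Ici.mpr hτ₀) (mem_Ici.mpr (hτ₀.trans hτ)) hτ
  -- pointwise (in τ) bound on the inner integral
  have hgτ : ∀ τ ∈ Ioc t₀ t₁,
      (∫ x in Ω, (F (u τ x) - F (v τ x)) * Φ x) ≤ A * τ ^ (-β) * C := by
    intro τ hτ
    have hτpos : 0 < τ := lt_of_le_of_lt ht₀0 hτ.1
    have hττ₀ : τ₀ ≤ τ := ht₀.trans hτ.1.le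
    have hcnn : 0 ≤ A * τ ^ (-β) :=
      mul_nonneg hA.le (Real.rpow_nonneg hτpos.le _)
    have hintτ : Integrable (fun x => (A * τ ^ (-β)) * ((u τ x - v τ x) * Φ x))
        (volume.restrict Ω) := by
      have : IntegrableOn (fun x => (u τ x - v τ x) * Φ x) Ω := by
        have := ((hint τ).1.sub (hint τ).2)
        simp only [sub_mul]; exact this
      exact this.const_mul _
    have step1 : (∫ x in Ω, (F (u τ x) - F (v τ x)) * Φ x)
        ≤ ∫ x in Ω, (A * τ ^ (-β)) * ((u τ x - v τ x) * Φ x) := by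
      apply integral_mono_of_nonneg
      · filter_upwards [hord τ] with x hx
        have h1 : F (v τ x) ≤ F (u τ x) :=
          hFmono (mem_Ici.mpr hx.1) (mem_Ici.mpr (hx.1.trans hx.2)) hx.2
        have := hΦnn x
        show (0:ℝ) ≤ _
        nlinarith
      · exact hintτ
      · filter_upwards [hpt] with x hx
        have h2 := hx τ hττ₀ hτpos
        have := hΦnn x
        nlinarith
    have step2 : (∫ x in Ω, (A * τ ^ (-β)) * ((u τ x - v τ x) * Φ x))
        = (A * τ ^ (-β)) * ∫ x in Ω, (u τ x - v τ x) * Φ x :=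
      MeasureTheory.integral_const_mul _ _
    calc (∫ x in Ω, (F (u τ x) - F (v τ x)) * Φ x)
        ≤ (A * τ ^ (-β)) * ∫ x in Ω, (u τ x - v τ x) * Φ x := by rw [← step2]; exact step1
      _ ≤ (A * τ ^ (-β)) * C := mul_le_mul_of_nonneg_left (hIC τ hττ₀) hcnn
      _ = A * τ ^ (-β) * C := rfl
  -- integrability of the dominating function
  have hdomInt : IntegrableOn (fun τ : ℝ => A * τ ^ (-β) * C) (Ioc t₀ t₁) := by
    have h1 : IntervalIntegrable (fun τ : ℝ => τ ^ (-β)) volume t₀ t₁ :=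
      intervalIntegral.intervalIntegrable_rpow' (by linarith)
    have h2 : IntervalIntegrable (fun τ : ℝ => A * τ ^ (-β) * C) volume t₀ t₁ := by
      simpa [mul_assoc, mul_comm, mul_left_comm] using (h1.const_mul A).mul_const C
    have := (intervalIntegrable_iff).mp h2
    rwa [uIoc_of_le ht₀₁] at this
  -- bound the time integral
  have hbound : (∫ τ in t₀..t₁, ∫ x in Ω, (F (u τ x) - F (v τ x)) * Φ x)
      ≤ A * C / (1 - β) * (t₁ - t₀) ^ (1 - β) := by
    have e1 : (∫ τ in t₀..t₁, ∫ x in Ω, (F (u τ x) - F (v τ x)) * Φ x)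
        = ∫ τ in Ioc t₀ t₁, ∫ x in Ω, (F (u τ x) - F (v τ x)) * Φ x :=
      intervalIntegral.integral_of_le ht₀₁
    have e2 : (∫ τ in Ioc t₀ t₁, ∫ x in Ω, (F (u τ x) - F (v τ x)) * Φ x)
        ≤ ∫ τ in Ioc t₀ t₁, A * τ ^ (-β) * C := by
      apply integral_mono_of_nonneg
      · exact Eventually.of_forall fun τ => hgnn τ
      · exact hdomInt
      · refine (ae_restrict_iff' measurableSet_Ioc).mpr (Eventually.of_forall ?_)
        exact hgτ
    have e3 : (∫ τ in Ioc t₀ t₁, A * τ ^ (-β) * C)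
        = A * C * ∫ τ in t₀..t₁, τ ^ (-β) := by
      rw [← intervalIntegral.integral_of_le ht₀₁]
      rw [← intervalIntegral.integral_const_mul]
      congr 1; funext τ; ring
    have e4 : (∫ τ in t₀..t₁, τ ^ (-β)) = (t₁ ^ (1 - β) - t₀ ^ (1 - β)) / (1 - β) := by
      rw [integral_rpow (Or.inl (by linarith))]
      rw [show -β + 1 = 1 - β by ring]
    have e5 : t₁ ^ (1 - β) - t₀ ^ (1 - β) ≤ (t₁ - t₀) ^ (1 - β) :=
      real_rpow_sub_le ht₀0 ht₀₁ (by linarith) (by linarith)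
    have h1β : 0 < 1 - β := by linarith
    calc (∫ τ in t₀..t₁, ∫ x in Ω, (F (u τ x) - F (v τ x)) * Φ x)
        ≤ A * C * ((t₁ ^ (1 - β) - t₀ ^ (1 - β)) / (1 - β)) := by
          rw [e1, ← e4, ← e3]; exact e2
      _ ≤ A * C * ((t₁ - t₀) ^ (1 - β) / (1 - β)) := by
          apply mul_le_mul_of_nonneg_left _ (mul_nonneg hA.le hC)
          gcongr
      _ = A * C / (1 - β) * (t₁ - t₀) ^ (1 - β) := by ring
  have hnn : 0 ≤ ∫ τ in t₀..t₁, ∫ x in Ω, (F (u τ x) - F (v τ x)) * Φ x :=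
    intervalIntegral.integral_nonneg ht₀₁ (fun τ _ => hgnn τ)
  constructor
  · rw [hkey]; positivity
  · rw [hkey]
    calc lam * ∫ τ in t₀..t₁, ∫ x in Ω, (F (u τ x) - F (v τ x)) * Φ x
        ≤ lam * (A * C / (1 - β) * (t₁ - t₀) ^ (1 - β)) :=
          mul_le_mul_of_nonneg_left hbound hlam.le
      _ = lam * A / (1 - β) * (t₁ - t₀) ^ (1 - β) * C := by ring
end

section
/- Let F be an (N1)-type nonlinearity with constants 0 < μ₀ ≤ μ₁ < 1 and mᵢ = 1/(1−μᵢ). Then for every r₀ > 0 there exist constants C₀, C₁ > 0, depending only on F, μ₀, μ₁ and r₀, such that for all real numbers 0 ≤ v ≤ u ≤ U: F(u) − F(v) ≤ C₀·U^{m₀−1}·(u−v) if U ≤ r₀, and F(u) − F(v) ≤ C₁·U^{m₁−1}·(u−v) if U ≥ r₀. -/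
open Set Filter MeasureTheory

private lemma mono_aux' {f f' : ℝ → ℝ}
    (hd : ∀ r : ℝ, 0 < r → HasDerivAt f (f' r) r)
    (hnn : ∀ r : ℝ, 0 < r → 0 ≤ f' r) {a b : ℝ} (ha : 0 < a) (hab : a ≤ b) :
    f a ≤ f b := by
  have hdiff : DifferentiableOn ℝ f (Ioi 0) := fun r hr =>
    ((hd r hr).differentiableAt).differentiableWithinAt
  have hmono := monotoneOn_of_deriv_nonneg (convex_Ioi (0:ℝ)) hdiff.continuousOn
    (by rwa [interior_Ioi])
    (by
      intro r hr
      rw [interior_Ioi] at hr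
      rw [(hd r hr).deriv]
      exact hnn r hr)
  exact hmono ha (lt_of_lt_of_le ha hab) hab

/-- Step 2 inequality (7.4) in the proof of the weighted `L¹`
estimates of the paper: for an (N1)-type nonlinearity `F` with `mᵢ = 1/(1-μᵢ)`,
for each `r₀ > 0` there are constants `C₀, C₁ > 0` such that for all
`0 ≤ v ≤ u ≤ U`: `F(u) − F(v) ≤ C₀ U^{m₀-1} (u−v)` if `U ≤ r₀`, and
`F(u) − F(v) ≤ C₁ U^{m₁-1} (u−v)` if `U ≥ r₀`. -/
theorem stmt16
    (F F' F'' : ℝ → ℝ) (μ₀ μ₁ m₀ m₁ : ℝ)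
    (hF0 : F 0 = 0)
    (hFcont : ContinuousOn F (Ici 0))
    (hFmono : MonotoneOn F (Ici 0))
    (hFpos : ∀ r : ℝ, 0 < r → 0 < F r)
    (hFd : ∀ r : ℝ, 0 < r → HasDerivAt F (F' r) r)
    (hFd2 : ∀ r : ℝ, 0 < r → HasDerivAt F' (F'' r) r)
    (hF''cont : ContinuousOn F'' (Ioi 0))
    (hF'pos : ∀ r : ℝ, 0 < r → 0 < F' r)
    (hFlim : Tendsto (fun r => F r / F' r) (nhdsWithin 0 (Ioi 0)) (nhds 0))
    (hμ₀ : 0 < μ₀) (hμ : μ₀ ≤ μ₁) (hμ₁ : μ₁ < 1)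
    (hpinch : ∀ r : ℝ, 0 < r →
      μ₀ ≤ F r * F'' r / (F' r) ^ 2 ∧ F r * F'' r / (F' r) ^ 2 ≤ μ₁)
    (hm₀ : m₀ = 1 / (1 - μ₀)) (hm₁ : m₁ = 1 / (1 - μ₁)) :
    ∀ r₀ : ℝ, 0 < r₀ → ∃ C₀ : ℝ, 0 < C₀ ∧ ∃ C₁ : ℝ, 0 < C₁ ∧
      ∀ v u U : ℝ, 0 ≤ v → v ≤ u → u ≤ U →
        (U ≤ r₀ → F u - F v ≤ C₀ * U ^ (m₀ - 1) * (u - v)) ∧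
        (r₀ ≤ U → F u - F v ≤ C₁ * U ^ (m₁ - 1) * (u - v)) := by
  intro r₀ hr₀
  have h1μ₁ : (0:ℝ) < 1 - μ₁ := by linarith
  have h1μ₀ : (0:ℝ) < 1 - μ₀ := by linarith
  have hm₀pos : 0 < m₀ := by rw [hm₀]; exact one_div_pos.mpr h1μ₀
  have hm₁pos : 0 < m₁ := by rw [hm₁]; exact one_div_pos.mpr h1μ₁
  -- pinch consequences
  have hpinch' : ∀ r : ℝ, 0 < r →
      μ₀ * (F' r) ^ 2 ≤ F r * F'' r ∧ F r * F'' r ≤ μ₁ * (F' r) ^ 2 := by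
    intro r hr
    have hsq : (0:ℝ) < (F' r) ^ 2 := pow_pos (hF'pos r hr) 2
    obtain ⟨h1, h2⟩ := hpinch r hr
    constructor
    · exact (le_div_iff₀ hsq).mp h1
    · exact (div_le_iff₀ hsq).mp h2
  have hF''nonneg : ∀ r : ℝ, 0 < r → 0 ≤ F'' r := by
    intro r hr
    have h1 := (hpinch' r hr).1
    have hFr := hFpos r hr
    have hF'r := hF'pos r hr
    nlinarith
  -- derivative of G = F/F'
  have hGd : ∀ r : ℝ, 0 < r → HasDerivAt (fun s => F s / F' s)
      ((F' r * F' r - F r * F'' r) / (F' r) ^ 2) r := by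
    intro r hr
    exact (hFd r hr).div (hFd2 r hr) (hF'pos r hr).ne'
  -- lower bound for G
  have hlin : Tendsto (fun s : ℝ => s) (nhdsWithin 0 (Ioi 0)) (nhds 0) :=
    tendsto_id.mono_left nhdsWithin_le_nhds
  have hG_lb : ∀ r : ℝ, 0 < r → (1 - μ₁) * r ≤ F r / F' r := by
    intro r hr
    have htend : Tendsto (fun s => F s / F' s - (1 - μ₁) * s)
        (nhdsWithin 0 (Ioi 0)) (nhds 0) := by
      have := hFlim.sub ((hlin.const_mul (1 - μ₁)))
      simpa using this
    have hev : ∀ᶠ s in nhdsWithin 0 (Ioi 0),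
        F s / F' s - (1 - μ₁) * s ≤ F r / F' r - (1 - μ₁) * r := by
      filter_upwards [Ioo_mem_nhdsGT_of_mem (left_mem_Ico.mpr hr)] with s hs
      refine mono_aux' (f := fun s => F s / F' s - (1 - μ₁) * s)
        (f' := fun t => (F' t * F' t - F t * F'' t) / (F' t) ^ 2 - (1 - μ₁))
        ?_ ?_ hs.1 hs.2.le
      · intro t ht
        exact (hGd t ht).sub (by simpa using (hasDerivAt_id t).const_mul (1 - μ₁))
      · intro t ht
        show 0 ≤ (F' t * F' t - F t * F'' t) / (F' t) ^ 2 - (1 - μ₁)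
        have hsq : (0:ℝ) < (F' t) ^ 2 := pow_pos (hF'pos t ht) 2
        have he : (F' t * F' t - F t * F'' t) / (F' t) ^ 2
            = 1 - F t * F'' t / (F' t) ^ 2 := by rw [sub_div, ← sq, div_self hsq.ne']
        rw [he]
        have := (hpinch t ht).2
        linarith
    have := le_of_tendsto htend hev
    linarith
  -- upper bound for G
  have hG_ub : ∀ r : ℝ, 0 < r → F r / F' r ≤ (1 - μ₀) * r := by
    intro r hr
    have htend : Tendsto (fun s => (1 - μ₀) * s - F s / F' s)
        (nhdsWithin 0 (Ioi 0)) (nhds 0) := by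
      have := ((hlin.const_mul (1 - μ₀))).sub hFlim
      simpa using this
    have hev : ∀ᶠ s in nhdsWithin 0 (Ioi 0),
        (1 - μ₀) * s - F s / F' s ≤ (1 - μ₀) * r - F r / F' r := by
      filter_upwards [Ioo_mem_nhdsGT_of_mem (left_mem_Ico.mpr hr)] with s hs
      refine mono_aux' (f := fun s => (1 - μ₀) * s - F s / F' s)
        (f' := fun t => (1 - μ₀) - (F' t * F' t - F t * F'' t) / (F' t) ^ 2)
        ?_ ?_ hs.1 hs.2.le
      · intro t ht
        have hlinD : HasDerivAt (fun s : ℝ => (1 - μ₀) * s) (1 - μ₀) t := by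
          simpa using (hasDerivAt_id t).const_mul (1 - μ₀)
        exact hlinD.sub (hGd t ht)
      · intro t ht
        show 0 ≤ (1 - μ₀) - (F' t * F' t - F t * F'' t) / (F' t) ^ 2
        have hsq : (0:ℝ) < (F' t) ^ 2 := pow_pos (hF'pos t ht) 2
        have he : (F' t * F' t - F t * F'' t) / (F' t) ^ 2
            = 1 - F t * F'' t / (F' t) ^ 2 := by rw [sub_div, ← sq, div_self hsq.ne']
        rw [he]
        have := (hpinch t ht).1
        linarith
    have := le_of_tendsto htend hev
    linarith
  -- F' r ≤ m₁ * F r / r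
  have hF'le : ∀ r : ℝ, 0 < r → F' r ≤ m₁ * F r / r := by
    intro r hr
    have key : (1 - μ₁) * r * F' r ≤ F r := (le_div_iff₀ (hF'pos r hr)).mp (hG_lb r hr)
    rw [hm₁, le_div_iff₀ hr, one_div, inv_mul_eq_div, le_div_iff₀ h1μ₁]
    nlinarith
  -- F' monotone on (0,∞)
  have hF'mono : ∀ a b : ℝ, 0 < a → a ≤ b → F' a ≤ F' b := by
    intro a b ha hab
    exact mono_aux' hFd2 hF''nonneg ha hab
  -- log-derivative bounds
  have hlogd : ∀ r : ℝ, 0 < r →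
      HasDerivAt (fun s => Real.log (F s)) (F' r / F r) r := by
    intro r hr
    exact (hFd r hr).log (hFpos r hr).ne'
  -- F U ≤ F r₀ * (U/r₀)^m₀ for 0 < U ≤ r₀
  have hFbound₀ : ∀ U : ℝ, 0 < U → U ≤ r₀ → F U ≤ F r₀ * (U / r₀) ^ m₀ := by
    intro U hU hUr₀
    have hmono : ∀ a b : ℝ, 0 < a → a ≤ b →
        Real.log (F a) - m₀ * Real.log a ≤ Real.log (F b) - m₀ * Real.log b := by
      intro a b ha hab
      refine mono_aux' (f := fun s => Real.log (F s) - m₀ * Real.log s)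
        (f' := fun t => F' t / F t - m₀ * t⁻¹) ?_ ?_ ha hab
      · intro t ht
        exact (hlogd t ht).sub ((Real.hasDerivAt_log ht.ne').const_mul m₀)
      · intro t ht
        have key : F t ≤ (1 - μ₀) * t * F' t := (div_le_iff₀ (hF'pos t ht)).mp (hG_ub t ht)
        have hFt := hFpos t ht
        have hF't := hF'pos t ht
        show 0 ≤ F' t / F t - m₀ * t⁻¹
        rw [sub_nonneg, hm₀, inv_eq_one_div, div_mul_div_comm, one_mul,
          div_le_div_iff₀ (mul_pos h1μ₀ ht) hFt]
        nlinarith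
    have hlog := hmono U r₀ hU hUr₀
    have hpow : (0:ℝ) < (U / r₀) ^ m₀ := Real.rpow_pos_of_pos (div_pos hU hr₀) m₀
    have hrhs : (0:ℝ) < F r₀ * (U / r₀) ^ m₀ := mul_pos (hFpos r₀ hr₀) hpow
    have hloge : Real.log (F r₀ * (U / r₀) ^ m₀)
        = Real.log (F r₀) + m₀ * (Real.log U - Real.log r₀) := by
      rw [Real.log_mul (hFpos r₀ hr₀).ne' hpow.ne',
        Real.log_rpow (div_pos hU hr₀), Real.log_div hU.ne' hr₀.ne']
    have : Real.log (F U) ≤ Real.log (F r₀ * (U / r₀) ^ m₀) := by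
      rw [hloge]; linarith
    calc F U = Real.exp (Real.log (F U)) := (Real.exp_log (hFpos U hU)).symm
      _ ≤ Real.exp (Real.log (F r₀ * (U / r₀) ^ m₀)) := Real.exp_le_exp.mpr this
      _ = F r₀ * (U / r₀) ^ m₀ := Real.exp_log hrhs
  -- F U ≤ F r₀ * (U/r₀)^m₁ for r₀ ≤ U
  have hFbound₁ : ∀ U : ℝ, r₀ ≤ U → F U ≤ F r₀ * (U / r₀) ^ m₁ := by
    intro U hUr₀
    have hU : 0 < U := lt_of_lt_of_le hr₀ hUr₀
    have hmono : ∀ a b : ℝ, 0 < a → a ≤ b →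
        m₁ * Real.log a - Real.log (F a) ≤ m₁ * Real.log b - Real.log (F b) := by
      intro a b ha hab
      refine mono_aux' (f := fun s => m₁ * Real.log s - Real.log (F s))
        (f' := fun t => m₁ * t⁻¹ - F' t / F t) ?_ ?_ ha hab
      · intro t ht
        exact ((Real.hasDerivAt_log ht.ne').const_mul m₁).sub (hlogd t ht)
      · intro t ht
        have key : (1 - μ₁) * t * F' t ≤ F t := (le_div_iff₀ (hF'pos t ht)).mp (hG_lb t ht)
        have hFt := hFpos t ht
        have hF't := hF'pos t ht
        show 0 ≤ m₁ * t⁻¹ - F' t / F t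
        rw [sub_nonneg, hm₁, inv_eq_one_div, div_mul_div_comm, one_mul,
          div_le_div_iff₀ hFt (mul_pos h1μ₁ ht)]
        nlinarith
    have hlog := hmono r₀ U hr₀ hUr₀
    have hpow : (0:ℝ) < (U / r₀) ^ m₁ := Real.rpow_pos_of_pos (div_pos hU hr₀) m₁
    have hrhs : (0:ℝ) < F r₀ * (U / r₀) ^ m₁ := mul_pos (hFpos r₀ hr₀) hpow
    have hloge : Real.log (F r₀ * (U / r₀) ^ m₁)
        = Real.log (F r₀) + m₁ * (Real.log U - Real.log r₀) := by
      rw [Real.log_mul (hFpos r₀ hr₀).ne' hpow.ne',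
        Real.log_rpow (div_pos hU hr₀), Real.log_div hU.ne' hr₀.ne']
    have : Real.log (F U) ≤ Real.log (F r₀ * (U / r₀) ^ m₁) := by
      rw [hloge]; linarith
    calc F U = Real.exp (Real.log (F U)) := (Real.exp_log (hFpos U hU)).symm
      _ ≤ Real.exp (Real.log (F r₀ * (U / r₀) ^ m₁)) := Real.exp_le_exp.mpr this
      _ = F r₀ * (U / r₀) ^ m₁ := Real.exp_log hrhs
  -- the constants
  have hC₀pos : 0 < m₁ * F r₀ / r₀ ^ m₀ :=
    div_pos (mul_pos hm₁pos (hFpos r₀ hr₀)) (Real.rpow_pos_of_pos hr₀ m₀)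
  have hC₁pos : 0 < m₁ * F r₀ / r₀ ^ m₁ :=
    div_pos (mul_pos hm₁pos (hFpos r₀ hr₀)) (Real.rpow_pos_of_pos hr₀ m₁)
  refine ⟨m₁ * F r₀ / r₀ ^ m₀, hC₀pos, m₁ * F r₀ / r₀ ^ m₁, hC₁pos, ?_⟩
  intro v u U hv hvu huU
  -- generic step from an upper bound on F' U
  have step : ∀ B : ℝ, 0 ≤ B → (0 < U → F' U ≤ B) → F u - F v ≤ B * (u - v) := by
    intro B hB hBle
    rcases eq_or_lt_of_le hvu with h | h
    · rw [h]; simp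
    · have hu : 0 < u := lt_of_le_of_lt hv h
      have hU : 0 < U := lt_of_lt_of_le hu huU
      obtain ⟨c, hc, hceq⟩ := exists_hasDerivAt_eq_slope F F' h
        (hFcont.mono (fun x hx => le_trans hv hx.1))
        (fun x hx => hFd x (lt_of_le_of_lt hv hx.1))
      have hc0 : 0 < c := lt_of_le_of_lt hv hc.1
      have hFc : F' c ≤ B := le_trans (hF'mono c U hc0 (le_trans hc.2.le huU)) (hBle hU)
      have heq : F u - F v = F' c * (u - v) := by
        rw [hceq, div_mul_cancel₀ _ (sub_ne_zero.mpr h.ne')]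
      rw [heq]
      exact mul_le_mul_of_nonneg_right hFc (by linarith)
  have hU0 : 0 ≤ U := le_trans (le_trans hv hvu) huU
  constructor
  · intro hUr₀
    apply step
    · exact mul_nonneg hC₀pos.le (Real.rpow_nonneg hU0 _)
    · intro hU
      have h1 : F' U ≤ m₁ * F U / U := hF'le U hU
      have h2 : F U ≤ F r₀ * (U / r₀) ^ m₀ := hFbound₀ U hU hUr₀
      have h3 : m₁ * F U / U ≤ m₁ * (F r₀ * (U / r₀) ^ m₀) / U := by gcongr
      have h4 : m₁ * (F r₀ * (U / r₀) ^ m₀) / U = m₁ * F r₀ / r₀ ^ m₀ * U ^ (m₀ - 1) := by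
        rw [Real.div_rpow hU.le hr₀.le, Real.rpow_sub hU, Real.rpow_one]
        have hr₀m : (0:ℝ) < r₀ ^ m₀ := Real.rpow_pos_of_pos hr₀ m₀
        field_simp
      linarith [h4 ▸ h3]
  · intro hUr₀
    apply step
    · exact mul_nonneg hC₁pos.le (Real.rpow_nonneg hU0 _)
    · intro hU
      have h1 : F' U ≤ m₁ * F U / U := hF'le U hU
      have h2 : F U ≤ F r₀ * (U / r₀) ^ m₁ := hFbound₁ U hUr₀
      have h3 : m₁ * F U / U ≤ m₁ * (F r₀ * (U / r₀) ^ m₁) / U := by gcongr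
      have h4 : m₁ * (F r₀ * (U / r₀) ^ m₁) / U = m₁ * F r₀ / r₀ ^ m₁ * U ^ (m₁ - 1) := by
        rw [Real.div_rpow hU.le hr₀.le, Real.rpow_sub hU, Real.rpow_one]
        have hr₀m : (0:ℝ) < r₀ ^ m₁ := Real.rpow_pos_of_pos hr₀ m₁
        field_simp
      linarith [h4 ▸ h3]
end

section
/- Let Ω ⊆ ℝ^N be measurable, Ψ : Ω → [0,∞) integrable, m₀ > 1, and let u : (0,∞) × Ω → [0,∞) be measurable with u(t,·) ∈ L¹(Ω, Ψ dx) for all t > 0 and such that t ↦ t^{1/(m₀−1)}·u(t,x) is nondecreasing for almost every x ∈ Ω. Suppose 0 < t₀ ≤ t₁, θ ∈ (0,1], A ≥ 0, and ∫_Ω u(t₁,x)Ψ(x) dx − ∫_Ω u(t₀,x)Ψ(x) dx ≤ A·(t₁−t₀)^θ·∫_Ω u(t₀,x)Ψ(x) dx. Then ∫_Ω |u(t₁,x) − u(t₀,x)|·Ψ(x) dx ≤ [A·(t₁−t₀)^θ + 2·(1 − (t₀/t₁)^{1/(m₀−1)})]·∫_Ω u(t₀,x)Ψ(x) dx. -/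
open Set Filter MeasureTheory

/-- time-continuity estimate (8.10), Step 2 of the existence
proof of Theorem 4.3 of the paper: the monotonicity of `t ↦ t^{1/(m₀-1)} u(t,x)`
controls the negative part of `u(t₁) − u(t₀)`, and combined with the weighted
Hölder-in-time bound it yields the weighted `L¹` time-continuity estimate. -/
theorem stmt18
    (N : ℕ) (Ω : Set (EuclideanSpace ℝ (Fin N))) (hΩm : MeasurableSet Ω)
    (Ψ : EuclideanSpace ℝ (Fin N) → ℝ)
    (hΨnn : ∀ x, 0 ≤ Ψ x) (hΨint : IntegrableOn Ψ Ω)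
    (m₀ : ℝ) (hm₀ : 1 < m₀)
    (u : ℝ → EuclideanSpace ℝ (Fin N) → ℝ)
    (hum : Measurable (Function.uncurry u))
    (hunn : ∀ t : ℝ, 0 < t → ∀ᵐ x ∂(volume.restrict Ω), 0 ≤ u t x)
    (huint : ∀ t : ℝ, 0 < t → IntegrableOn (fun x => u t x * Ψ x) Ω)
    (hmono : ∀ᵐ x ∂(volume.restrict Ω),
      MonotoneOn (fun t => t ^ (1 / (m₀ - 1)) * u t x) (Ioi 0))
    (t₀ t₁ θ A : ℝ) (ht₀ : 0 < t₀) (ht : t₀ ≤ t₁)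
    (hθ0 : 0 < θ) (hθ1 : θ ≤ 1) (hA : 0 ≤ A)
    (hhold : (∫ x in Ω, u t₁ x * Ψ x) - (∫ x in Ω, u t₀ x * Ψ x)
      ≤ A * (t₁ - t₀) ^ θ * ∫ x in Ω, u t₀ x * Ψ x) :
    (∫ x in Ω, |u t₁ x - u t₀ x| * Ψ x)
      ≤ (A * (t₁ - t₀) ^ θ + 2 * (1 - (t₀ / t₁) ^ (1 / (m₀ - 1))))
          * ∫ x in Ω, u t₀ x * Ψ x := by
  have ht₁ : 0 < t₁ := lt_of_lt_of_le ht₀ ht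
  set α := 1 / (m₀ - 1) with hα
  have hαpos : 0 < α := by
    have : 0 < m₀ - 1 := by linarith
    positivity
  set c := (t₀ / t₁) ^ α with hc
  have hdiv : 0 < t₀ / t₁ := div_pos ht₀ ht₁
  have hc0 : 0 < c := Real.rpow_pos_of_pos hdiv α
  have hc1 : c ≤ 1 :=
    Real.rpow_le_one hdiv.le ((div_le_one ht₁).mpr ht) hαpos.le
  have hmu : ∀ t : ℝ, Measurable fun x => u t x := fun t =>
    hum.comp measurable_prodMk_left
  have hi0 := huint t₀ ht₀
  have hi1 := huint t₁ ht₁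
  have key : ∀ᵐ x ∂(volume.restrict Ω),
      |u t₁ x - u t₀ x| * Ψ x
        ≤ (u t₁ x * Ψ x - u t₀ x * Ψ x) + 2 * (1 - c) * (u t₀ x * Ψ x) := by
    filter_upwards [hmono, hunn t₀ ht₀] with x hx h0
    have hmle := hx (mem_Ioi.mpr ht₀) (mem_Ioi.mpr ht₁) ht
    simp only at hmle
    have hcu : c * u t₀ x ≤ u t₁ x := by
      have h1 : (0:ℝ) < t₁ ^ α := Real.rpow_pos_of_pos ht₁ α
      have hdr : c = t₀ ^ α / t₁ ^ α := by
        rw [hc, Real.div_rpow ht₀.le ht₁.le]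
      rw [hdr, div_mul_eq_mul_div, div_le_iff₀ h1]
      nlinarith [hmle]
    have habs : |u t₁ x - u t₀ x| ≤ (u t₁ x - u t₀ x) + 2 * (1 - c) * u t₀ x := by
      rcases abs_cases (u t₁ x - u t₀ x) with ⟨h, _⟩ | ⟨h, _⟩ <;> rw [h] <;> nlinarith
    nlinarith [mul_le_mul_of_nonneg_right habs (hΨnn x)]
  have hiL : IntegrableOn (fun x => |u t₁ x - u t₀ x| * Ψ x) Ω := by
    apply Integrable.mono' (hi1.add hi0)
    · exact ((((hmu t₁).sub (hmu t₀)).abs.aestronglyMeasurable).mul hΨint.1)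
    · filter_upwards [hunn t₀ ht₀, hunn t₁ ht₁] with x h0 h1
      rw [Real.norm_eq_abs, abs_mul, abs_abs, abs_of_nonneg (hΨnn x)]
      simp only [Pi.add_apply]
      rcases abs_cases (u t₁ x - u t₀ x) with ⟨h, _⟩ | ⟨h, _⟩ <;> rw [h] <;>
        nlinarith [hΨnn x]
  have hiR : IntegrableOn
      (fun x => (u t₁ x * Ψ x - u t₀ x * Ψ x) + 2 * (1 - c) * (u t₀ x * Ψ x)) Ω :=
    (hi1.sub hi0).add (hi0.const_mul _)
  have hsub : IntegrableOn (fun x => u t₁ x * Ψ x - u t₀ x * Ψ x) Ω := hi1.sub hi0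
  have hle := integral_mono_ae hiL hiR key
  rw [integral_add hsub (hi0.const_mul _), integral_sub hi1 hi0,
    integral_const_mul] at hle
  nlinarith [hle, hhold]
end
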